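/- arXiv:1502.00418 — 8 statements merged into one kernel-verified Lean document; each statement's English description precedes it below -/
import Mathlib

section
/- Let X be a sequentially complete Hausdorff locally convex topological vector space over ℂ (every Cauchy sequence in X converges), let (a_n)_{n≥1} be a sequence in X and s₀ ∈ ℂ. If the Dirichlet series Σ_n a_n n^{−s₀} converges in X, then for every s ∈ ℂ with Re s > Re s₀ the series Σ_n a_n n^{−s} converges in X. -/
open Filter Finset Topology

/-!
Put `w = s - s₀`, so `0 < Re w` and `n ^ (-s) • aₙ = n ^ (-w) • bₙ` with `bₙ = n ^ (-s₀) • aₙ`.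
Summation by parts writes the partial sums of `∑ n ^ (-w) • bₙ` through the tails `Bₙ - L` of the
convergent series `∑ bₙ = L`. By the mean value theorem the weights have summable differences,
`‖n ^ (-w) - (n + 1) ^ (-w)‖ ≤ ‖w‖ n ^ (-Re w - 1)`, so in every continuous seminorm the
by-parts series is dominated by an absolutely convergent one and is Cauchy; sequential
completeness then gives convergence.
-/

open scoped ComplexOrder in
theorem LocallyConvexSpace.of_real_scalars {𝕜 E : Type*} [RCLike 𝕜] [AddCommGroup E] [Module 𝕜 E]
    [Module ℝ E] [IsScalarTower ℝ 𝕜 E] [TopologicalSpace E] [IsTopologicalAddGroup E]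
    [LocallyConvexSpace ℝ E] : LocallyConvexSpace 𝕜 E := by
  rw [locallyConvexSpace_iff_exists_convex_subset_zero]
  intro U hU
  obtain ⟨S, hS, hSconvex, hSU⟩ :=
    (locallyConvexSpace_iff_exists_convex_subset_zero ℝ E).1 ‹_› U hU
  exact ⟨S, hS, convex_RCLike_iff_convex_real.2 hSconvex, hSU⟩

theorem Finset.sum_range_by_parts_centered {R M : Type*} [CommRing R] [AddCommGroup M] [Module R M]
    (c : ℕ → R) (b : ℕ → M) (L : M) (N : ℕ) :
    ∑ n ∈ range N, c n • b n = c N • (∑ n ∈ range N, b n - L)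
      + ∑ n ∈ range N, (c n - c (n + 1)) • (∑ k ∈ range (n + 1), b k - L) + c 0 • L := by
  induction N with
  | zero => simp
  | succ N ih =>
    rw [sum_range_succ (fun n => c n • b n), sum_range_succ (fun n => (c n - c (n + 1)) • _),
      sum_range_succ b N]
    linear_combination (norm := module) ih

theorem Complex.norm_ofReal_add_one_cpow_sub_cpow_le {x : ℝ} (hx : 0 < x) {w : ℂ}
    (hw : -1 ≤ w.re) :
    ‖((x + 1 : ℝ) : ℂ) ^ (-w) - (x : ℂ) ^ (-w)‖ ≤ ‖w‖ * x ^ (-(w.re + 1)) := by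
  have hderiv : ∀ t ∈ Set.Icc x (x + 1), HasDerivWithinAt (fun t : ℝ => (t : ℂ) ^ (-w))
      (-w * (t : ℂ) ^ (-w - 1)) (Set.Icc x (x + 1)) t := by
    intro t ht
    have ht0 : 0 < t := hx.trans_le ht.1
    exact ((Complex.hasStrictDerivAt_cpow_const
      (Complex.ofReal_mem_slitPlane.2 ht0)).hasDerivAt.comp_ofReal).hasDerivWithinAt
  have hbound : ∀ t ∈ Set.Icc x (x + 1), ‖-w * (t : ℂ) ^ (-w - 1)‖ ≤ ‖w‖ * x ^ (-(w.re + 1)) := by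
    intro t ht
    have ht0 : 0 < t := hx.trans_le ht.1
    have hre : (-w - 1).re = -(w.re + 1) := by
      simp only [Complex.sub_re, Complex.neg_re, Complex.one_re]; ring
    rw [norm_mul, norm_neg, Complex.norm_cpow_eq_rpow_re_of_pos ht0, hre]
    exact mul_le_mul_of_nonneg_left (Real.rpow_le_rpow_of_nonpos hx ht.1 (by linarith))
      (norm_nonneg w)
  simpa using (convex_Icc x (x + 1)).norm_image_sub_le_of_norm_hasDerivWithin_le hderiv hbound
    (Set.left_mem_Icc.2 (by linarith)) (Set.right_mem_Icc.2 (by linarith))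

theorem summable_norm_natCast_cpow_neg_sub {w : ℂ} (hw : 0 < w.re) :
    Summable fun n : ℕ => ‖((n + 1 : ℕ) : ℂ) ^ (-w) - ((n + 1 + 1 : ℕ) : ℂ) ^ (-w)‖ := by
  have hdom : Summable fun n : ℕ => ‖w‖ * ((n + 1 : ℕ) : ℝ) ^ (-(w.re + 1)) :=
    ((summable_nat_add_iff 1).2 (Real.summable_nat_rpow.2 (by linarith))).mul_left _
  refine hdom.of_nonneg_of_le (fun _ => norm_nonneg _) fun n => ?_
  rw [norm_sub_rev]
  have := Complex.norm_ofReal_add_one_cpow_sub_cpow_le (x := ((n + 1 : ℕ) : ℝ)) (by positivity)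
    (w := w) (by linarith)
  exact_mod_cast this

section Seminorms

variable {𝕜 X ι : Type*} [NormedField 𝕜] [AddCommGroup X] [Module 𝕜 X]
  [UniformSpace X] [IsUniformAddGroup X] {p : SeminormFamily 𝕜 X ι}

theorem WithSeminorms.cauchySeq_sum_range_smul (hp : WithSeminorms p) {d : ℕ → 𝕜} {v : ℕ → X}
    (hd : Summable fun n => ‖d n‖) (hv : Tendsto v atTop (𝓝 0)) :
    CauchySeq fun N => ∑ n ∈ range N, d n • v n := by
  set D := ∑' n, ‖d n‖
  have hD : 0 ≤ D := tsum_nonneg fun _ => norm_nonneg _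
  have htail : ∀ i δ M, (∀ k ≥ M, p i (v k) < δ) → ∀ n ≥ M,
      p i (∑ k ∈ range n, d k • v k - ∑ k ∈ range M, d k • v k) ≤ D * δ := by
    intro i δ M hsmall n hn
    rw [← sum_Ico_eq_sub _ hn]
    calc p i (∑ k ∈ Ico M n, d k • v k)
        ≤ ∑ k ∈ Ico M n, ‖d k‖ * δ := by
          refine (le_sum_of_subadditive (p i) (map_zero _).le (map_add_le_add _) _ _).trans ?_
          refine sum_le_sum fun k hk => ?_
          rw [map_smul_eq_mul]
          exact mul_le_mul_of_nonneg_left (hsmall k (mem_Ico.1 hk).1).le (norm_nonneg _)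
      _ ≤ D * δ := by
          rw [← sum_mul]
          exact mul_le_mul_of_nonneg_right (hd.sum_le_tsum _ fun _ _ => norm_nonneg _)
            (le_trans (apply_nonneg _ _) (hsmall M le_rfl).le)
  rw [CauchySeq, IsUniformAddGroup.cauchy_map_iff_tendsto, hp.tendsto_nhds]
  refine ⟨inferInstance, fun i ε hε => ?_⟩
  set δ := ε / (2 * (D + 1))
  have hδ : 2 * D * δ < ε := by
    rw [show 2 * D * δ = ε * (D / (D + 1)) by simp only [δ]; field_simp]
    exact mul_lt_of_lt_one_right hε ((div_lt_one (by linarith)).2 (by linarith))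
  obtain ⟨M, hM⟩ := eventually_atTop.1 ((hp.tendsto_nhds v 0).1 hv i δ (by positivity))
  simp only [sub_zero] at hM
  filter_upwards [prod_mem_prod (Ici_mem_atTop M) (Ici_mem_atTop M)] with ⟨m, n⟩ ⟨hm, hn⟩
  calc p i (∑ k ∈ range m, d k • v k - ∑ k ∈ range n, d k • v k - 0)
      ≤ p i (∑ k ∈ range m, d k • v k - ∑ k ∈ range M, d k • v k)
        + p i (∑ k ∈ range n, d k • v k - ∑ k ∈ range M, d k • v k) := by
        rw [sub_zero, ← sub_sub_sub_cancel_right _ _ (∑ k ∈ range M, d k • v k)]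
        exact map_sub_le_add _ _ _
    _ ≤ D * δ + D * δ := add_le_add (htail i δ M hM m hm) (htail i δ M hM n hn)
    _ < ε := by linarith

theorem WithSeminorms.exists_tendsto_sum_range_smul [CompleteSpace 𝕜] [ContinuousSMul 𝕜 X]
    (hp : WithSeminorms p) (hseq : ∀ u : ℕ → X, CauchySeq u → ∃ x, Tendsto u atTop (𝓝 x))
    {b : ℕ → X} {L : X} (hb : Tendsto (fun N => ∑ n ∈ range N, b n) atTop (𝓝 L))
    {c : ℕ → 𝕜} (hc : Summable fun n => ‖c n - c (n + 1)‖) :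
    ∃ L', Tendsto (fun N => ∑ n ∈ range N, c n • b n) atTop (𝓝 L') := by
  obtain ⟨γ, hγ⟩ := cauchySeq_tendsto_of_complete
    (cauchySeq_of_summable_dist (f := c) (by simpa only [dist_eq_norm] using hc))
  have htails : Tendsto (fun n => ∑ k ∈ range (n + 1), b k - L) atTop (𝓝 0) := by
    simpa using (hb.comp (tendsto_add_atTop_nat 1)).sub_const L
  obtain ⟨T, hT⟩ := hseq _ (hp.cauchySeq_sum_range_smul hc htails)
  have hboundary : Tendsto (fun N => c N • (∑ n ∈ range N, b n - L)) atTop (𝓝 0) := by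
    simpa using hγ.smul (hb.sub_const L) (f := c)
  refine ⟨0 + T + c 0 • L, ?_⟩
  simp_rw [sum_range_by_parts_centered c b L]
  exact (hboundary.add hT).add_const _

end Seminorms

theorem dirichlet_converges_of_re_gt_general
    {X : Type*} [AddCommGroup X] [Module ℂ X] [UniformSpace X] [IsUniformAddGroup X]
    [ContinuousSMul ℂ X] [Module ℝ X] [IsScalarTower ℝ ℂ X]
    [LocallyConvexSpace ℝ X]
    (hseq : ∀ u : ℕ → X, CauchySeq u → ∃ x : X, Tendsto u atTop (𝓝 x))
    (a : ℕ → X) (s₀ : ℂ)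
    (h : ∃ L : X, Tendsto
      (fun N : ℕ => ∑ n ∈ Finset.range N, (((n + 1 : ℕ) : ℂ) ^ (-s₀)) • a (n + 1))
      atTop (𝓝 L))
    (s : ℂ) (hs : s₀.re < s.re) :
    ∃ L : X, Tendsto
      (fun N : ℕ => ∑ n ∈ Finset.range N, (((n + 1 : ℕ) : ℂ) ^ (-s)) • a (n + 1))
      atTop (𝓝 L) := by
  have : ContinuousSMul ℝ X := IsScalarTower.continuousSMul ℂ
  open scoped ComplexOrder in
  have : LocallyConvexSpace ℂ X := .of_real_scalars
  obtain ⟨L, hL⟩ := h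
  have hfactor : ∀ n : ℕ, ((n + 1 : ℕ) : ℂ) ^ (-s) • a (n + 1)
      = ((n + 1 : ℕ) : ℂ) ^ (-(s - s₀)) • ((n + 1 : ℕ) : ℂ) ^ (-s₀) • a (n + 1) := by
    intro n
    rw [← mul_smul, ← Complex.cpow_add _ _ (Nat.cast_ne_zero.2 n.succ_ne_zero),
      show -(s - s₀) + -s₀ = -s by ring]
  simp_rw [hfactor]
  exact with_gaugeSeminormFamily.exists_tendsto_sum_range_smul hseq hL
    (summable_norm_natCast_cpow_neg_sub (by simpa using hs))

/-- If a Dirichlet series with coefficients in a sequentially complete Hausdorff locally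
convex space converges at `s₀`, then it converges at every `s` with `Re s > Re s₀`. -/
theorem dirichlet_converges_of_re_gt
    {X : Type*} [AddCommGroup X] [Module ℂ X] [UniformSpace X] [IsUniformAddGroup X]
    [ContinuousSMul ℂ X] [T2Space X] [Module ℝ X] [IsScalarTower ℝ ℂ X]
    [LocallyConvexSpace ℝ X]
    (hseq : ∀ u : ℕ → X, CauchySeq u → ∃ x : X, Tendsto u atTop (𝓝 x))
    (a : ℕ → X) (s₀ : ℂ)
    (h : ∃ L : X, Tendsto
      (fun N : ℕ => ∑ n ∈ Finset.range N, (((n + 1 : ℕ) : ℂ) ^ (-s₀)) • a (n + 1))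
      atTop (𝓝 L))
    (s : ℂ) (hs : s₀.re < s.re) :
    ∃ L : X, Tendsto
      (fun N : ℕ => ∑ n ∈ Finset.range N, (((n + 1 : ℕ) : ℂ) ^ (-s)) • a (n + 1))
      atTop (𝓝 L) :=
  dirichlet_converges_of_re_gt_general hseq a s₀ h s hs
end

section
/- Let X = ℂ^ℕ be the space of all complex sequences with the product (pointwise convergence) topology, and for n ≥ 1 let a_n ∈ X be the sequence whose i-th coordinate (i ∈ ℕ) is n^i. Then: (a) for every s ∈ ℂ the Dirichlet series Σ_n a_n n^{−s} does not converge in X; (b) for every continuous linear functional x' on X there exists σ₀ ∈ ℝ such that Σ_n |x'(a_n)| n^{−σ} < ∞ for every real σ > σ₀. -/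
open Filter Finset Topology

/-- In `X = ℂ^ℕ` with the product topology, the Dirichlet series with coefficients
`aₙ = (n^i)_{i ∈ ℕ}` converges nowhere, while for every continuous linear functional `x'`
the scalar series `∑ₙ x'(aₙ) n^{-σ}` converges absolutely for all large real `σ`. -/
theorem dirichlet_example_pi_space
    (a : ℕ → (ℕ → ℂ)) (ha : ∀ n i, a n i = ((n : ℂ)) ^ i) :
    (∀ s : ℂ, ¬ ∃ L : ℕ → ℂ, Tendsto
      (fun N : ℕ => ∑ n ∈ Finset.range N, (((n + 1 : ℕ) : ℂ) ^ (-s)) • a (n + 1))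
      atTop (𝓝 L)) ∧
    (∀ x' : (ℕ → ℂ) →L[ℂ] ℂ, ∃ σ₀ : ℝ, ∀ σ : ℝ, σ₀ < σ →
      Summable (fun n : ℕ => ‖x' (a (n + 1))‖ * ((n + 1 : ℕ) : ℝ) ^ (-σ))) := by
  constructor
  · -- Part (a): at coordinate `i > Re s` the terms do not tend to `0`.
    rintro s ⟨L, hL⟩
    set i : ℕ := ⌈s.re⌉₊ + 1 with hi
    have hire : s.re + 1 ≤ (i : ℝ) := by
      have := Nat.le_ceil s.re
      push_cast [hi]
      linarith
    -- the `i`-th coordinate of the partial sums converges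
    have hLi : Tendsto
        (fun N : ℕ => ∑ n ∈ Finset.range N, (((n + 1 : ℕ) : ℂ) ^ (-s)) * a (n + 1) i)
        atTop (𝓝 (L i)) := by
      have := (tendsto_pi_nhds.mp hL) i
      simpa using this
    -- hence the terms tend to `0`
    have hterm : Tendsto
        (fun N : ℕ => (((N + 1 : ℕ) : ℂ) ^ (-s)) * a (N + 1) i) atTop (𝓝 0) := by
      have h1 : Tendsto
          (fun N : ℕ => ∑ n ∈ Finset.range (N + 1), (((n + 1 : ℕ) : ℂ) ^ (-s)) * a (n + 1) i)
          atTop (𝓝 (L i)) := hLi.comp (tendsto_add_atTop_nat 1)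
      have := h1.sub hLi
      simp only [Finset.sum_range_succ, sub_self, add_sub_cancel_left] at this
      simpa using this
    -- but the norms of the terms are at least `N + 1`
    have hnorm : ∀ N : ℕ, (N + 1 : ℝ) ≤ ‖(((N + 1 : ℕ) : ℂ) ^ (-s)) * a (N + 1) i‖ := by
      intro N
      have hpos : (0 : ℝ) < (N + 1 : ℕ) := by positivity
      rw [ha, norm_mul, Complex.norm_natCast_cpow_of_pos (Nat.succ_pos N), norm_pow]
      rw [Complex.norm_natCast]
      have h2 : ((N + 1 : ℕ) : ℝ) ^ i = ((N + 1 : ℕ) : ℝ) ^ (i : ℝ) := by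
        rw [Real.rpow_natCast]
      rw [h2, ← Real.rpow_add hpos]
      have h3 : (1 : ℝ) ≤ (-s).re + (i : ℝ) := by
        simp only [Complex.neg_re]
        linarith
      calc (N + 1 : ℝ) = ((N + 1 : ℕ) : ℝ) ^ (1 : ℝ) := by push_cast; rw [Real.rpow_one]
        _ ≤ ((N + 1 : ℕ) : ℝ) ^ ((-s).re + (i : ℝ)) := by
            apply Real.rpow_le_rpow_of_exponent_le _ h3
            push_cast; linarith
    have h0 : Tendsto (fun N : ℕ => ‖(((N + 1 : ℕ) : ℂ) ^ (-s)) * a (N + 1) i‖)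
        atTop (𝓝 0) := by simpa using hterm.norm
    have : ∀ᶠ N : ℕ in atTop, ‖(((N + 1 : ℕ) : ℂ) ^ (-s)) * a (N + 1) i‖ < 1 :=
      h0.eventually (gt_mem_nhds one_pos)
    obtain ⟨N, hN⟩ := this.exists
    have := hnorm N
    have : (N + 1 : ℝ) < 1 := lt_of_le_of_lt this hN
    linarith [Nat.cast_nonneg (α := ℝ) N]
  · -- Part (b): `x'` is controlled by finitely many coordinates.
    intro x'
    -- the product topology on `ℕ → ℂ` is generated by the coordinate seminorms
    set P := SeminormFamily.sigma (fun i : ℕ =>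
      SeminormFamily.comp (fun _ : Fin 1 => normSeminorm ℂ ℂ) (LinearMap.proj i)) with hPdef
    have hP : WithSeminorms P := withSeminorms_pi (fun _ => norm_withSeminorms ℂ ℂ)
    -- `x ↦ ‖x' x‖` is a continuous seminorm
    set q : Seminorm ℂ (ℕ → ℂ) := (normSeminorm ℂ ℂ).comp (x' : (ℕ → ℂ) →ₗ[ℂ] ℂ) with hq
    have hqc : Continuous q := by
      have : Continuous fun x => ‖x' x‖ := x'.continuous.norm
      exact this
    obtain ⟨t, C, hC0, hCb⟩ := Seminorm.bound_of_continuous hP q hqc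
    -- let `k` be the largest coordinate occurring in `t`
    set k : ℕ := t.sup (fun x => x.1) with hk
    refine ⟨(k : ℝ) + 1, fun σ hσ => ?_⟩
    -- the comparison series
    have hsum : Summable (fun n : ℕ => (C : ℝ) * ((n + 1 : ℕ) : ℝ) ^ ((k : ℝ) - σ)) := by
      apply Summable.mul_left
      have h1 : Summable (fun n : ℕ => (n : ℝ) ^ ((k : ℝ) - σ)) :=
        Real.summable_nat_rpow.mpr (by linarith)
      have := (summable_nat_add_iff 1).mpr h1
      simpa using this
    apply Summable.of_nonneg_of_le _ _ hsum
    · intro n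
      positivity
    · intro n
      have hn1 : (1 : ℝ) ≤ ((n + 1 : ℕ) : ℝ) := by push_cast; linarith [Nat.cast_nonneg (α := ℝ) n]
      have hnpos : (0 : ℝ) < ((n + 1 : ℕ) : ℝ) := by positivity
      -- bound `‖x' (a (n+1))‖` by `C * (n+1)^k`
      have hb : ‖x' (a (n + 1))‖ ≤ (C : ℝ) * ((n + 1 : ℕ) : ℝ) ^ k := by
        have h1 := hCb (a (n + 1))
        have h2 : (t.sup P) (a (n + 1)) ≤ ((n + 1 : ℕ) : ℝ) ^ k := by
          apply Seminorm.finset_sup_apply_le (by positivity)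
          rintro ⟨j, u⟩ hj
          have hjk : j ≤ k := Finset.le_sup (f := fun x => x.1) hj
          have : ‖a (n + 1) j‖ = ((n + 1 : ℕ) : ℝ) ^ j := by
            rw [ha, norm_pow, Complex.norm_natCast]
          simp only [hPdef, SeminormFamily.sigma, SeminormFamily.comp, Seminorm.comp_apply,
            LinearMap.proj_apply, coe_normSeminorm]
          rw [this]
          exact pow_le_pow_right₀ hn1 hjk
        calc ‖x' (a (n + 1))‖ = q (a (n + 1)) := rfl
          _ ≤ (C • t.sup P) (a (n + 1)) := h1
          _ = (C : ℝ) * (t.sup P) (a (n + 1)) := by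
              rw [Seminorm.smul_apply, NNReal.smul_def, smul_eq_mul]
          _ ≤ (C : ℝ) * ((n + 1 : ℕ) : ℝ) ^ k :=
              mul_le_mul_of_nonneg_left h2 C.2
      calc ‖x' (a (n + 1))‖ * ((n + 1 : ℕ) : ℝ) ^ (-σ)
          ≤ ((C : ℝ) * ((n + 1 : ℕ) : ℝ) ^ k) * ((n + 1 : ℕ) : ℝ) ^ (-σ) := by
            apply mul_le_mul_of_nonneg_right hb (Real.rpow_nonneg hnpos.le _)
        _ = (C : ℝ) * ((n + 1 : ℕ) : ℝ) ^ ((k : ℝ) - σ) := by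
            rw [mul_assoc, ← Real.rpow_natCast _ k, ← Real.rpow_add hnpos]
            ring_nf
end

section
/- Let X be a Hausdorff locally convex topological vector space over ℂ with the countable neighbourhood property: for every sequence (α_j)_j of continuous seminorms on X there exist a continuous seminorm α on X and positive scalars (λ_j)_j with α_j(x) ≤ λ_j α(x) for all j and all x ∈ X. Let (x_n)_{n≥1} be a sequence in X such that for every continuous linear functional x' on X there exists k ∈ ℕ with sup_n n^{−k} |x'(x_n)| < ∞. Then there exists k₀ ∈ ℕ such that sup_n n^{−k₀} α(x_n) < ∞ for every continuous seminorm α on X. -/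
/-!
For one continuous seminorm `α`, view `X` as the seminormed space `(X, α)`: its dual is a Banach
space whose elements restrict to continuous functionals on `X`. The sets
`Sₘ = {f | ‖f (xₙ)‖ ≤ m nᵐ for all n}` are closed and cover that dual, so by Baire one of them
contains a ball, and the Hahn–Banach theorem turns this into `α(xₙ) ≤ C nᵐ`. Thus each `α` has its
own exponent. If no exponent served every `α`, pick `α_k` violating exponent `k`; a continuous
seminorm dominating all `α_k`, given by the countable neighbourhood property, would then violate
its own exponent.
-/

def PolyBoundedBy (k : ℕ) (u : ℕ → ℝ) : Prop :=
  ∃ C : ℝ, ∀ n : ℕ, (((n + 1 : ℕ) : ℝ) ^ k)⁻¹ * u n ≤ C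

namespace PolyBoundedBy

variable {k : ℕ} {u v : ℕ → ℝ}

theorem iff_le_mul_pow : PolyBoundedBy k u ↔ ∃ C : ℝ, ∀ n : ℕ, u n ≤ C * ((n + 1 : ℕ) : ℝ) ^ k :=
  exists_congr fun C => forall_congr' fun n => by
    rw [inv_mul_le_iff₀ (by positivity), mul_comm]

theorem exists_nat_forall_le_mul_pow (h : PolyBoundedBy k u) :
    ∃ m : ℕ, ∀ n : ℕ, u n ≤ m * ((n + 1 : ℕ) : ℝ) ^ m := by
  obtain ⟨C, hC⟩ := iff_le_mul_pow.1 h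
  refine ⟨max k ⌈C⌉₊, fun n => (hC n).trans ?_⟩
  have hn : (1 : ℝ) ≤ ((n + 1 : ℕ) : ℝ) := by exact_mod_cast Nat.le_add_left 1 n
  gcongr
  · exact (Nat.le_ceil C).trans (by exact_mod_cast le_max_right _ _)
  · exact le_max_left _ _

theorem of_le_mul {c : ℝ} (hv : PolyBoundedBy k v) (hc : 0 ≤ c) (huv : ∀ n, u n ≤ c * v n) :
    PolyBoundedBy k u := by
  obtain ⟨C, hC⟩ := hv
  refine ⟨c * C, fun n => ?_⟩
  calc (((n + 1 : ℕ) : ℝ) ^ k)⁻¹ * u n ≤ (((n + 1 : ℕ) : ℝ) ^ k)⁻¹ * (c * v n) := by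
        gcongr; exact huv n
    _ = c * ((((n + 1 : ℕ) : ℝ) ^ k)⁻¹ * v n) := by ring
    _ ≤ c * C := by gcongr; exact hC n

end PolyBoundedBy

/-- `X` with the seminormed structure of `p`; a type synonym, so that its topology does not clash
with the given topology of `X`. -/
@[nolint unusedArguments]
def Seminorm.Space {𝕜 X : Type*} [NormedField 𝕜] [AddCommGroup X] [Module 𝕜 X]
    (_p : Seminorm 𝕜 X) : Type _ := X

namespace Seminorm.Space

variable {𝕜 X : Type*} [NormedField 𝕜] [AddCommGroup X] [Module 𝕜 X] (p : Seminorm 𝕜 X)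

instance : AddCommGroup p.Space := inferInstanceAs (AddCommGroup X)
instance : Module 𝕜 p.Space := inferInstanceAs (Module 𝕜 X)
noncomputable instance : SeminormedAddCommGroup p.Space :=
  { (p.toAddGroupSeminorm : AddGroupSeminorm p.Space).toSeminormedAddCommGroup with
    toAddCommGroup := inferInstanceAs (AddCommGroup X) }
noncomputable instance : NormedSpace 𝕜 p.Space :=
  ⟨fun c z => (map_smul_eq_mul p c z).le⟩

def of : X →ₗ[𝕜] p.Space := LinearMap.id

variable {p} [TopologicalSpace X] [IsTopologicalAddGroup X]

def ofCLM (hp : Continuous p) : X →L[𝕜] p.Space :=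
  ⟨of p, WithSeminorms.continuous_of_continuous_comp (norm_withSeminorms 𝕜 p.Space) (of p)
    fun _ => hp⟩

end Seminorm.Space

section Dual

variable {𝕜 E : Type*} [RCLike 𝕜] [SeminormedAddCommGroup E] [NormedSpace 𝕜 E]

theorem norm_le_of_forall_mem_ball_dual {v : E} {f₀ : StrongDual 𝕜 E} {r M : ℝ} (hr : 0 < r)
    (h : ∀ f ∈ Metric.ball f₀ r, ‖f v‖ ≤ M) : ‖v‖ ≤ 4 * M / r := by
  have hM : 0 ≤ M := (norm_nonneg _).trans (h f₀ (Metric.mem_ball_self hr))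
  have hball : ∀ g : StrongDual 𝕜 E, ‖g‖ < r → ‖g v‖ ≤ 2 * M := fun g hg => by
    have hg' : f₀ + g ∈ Metric.ball f₀ r := by rwa [Metric.mem_ball, dist_self_add_left]
    calc ‖g v‖ = ‖(f₀ + g) v - f₀ v‖ := by simp
      _ ≤ ‖(f₀ + g) v‖ + ‖f₀ v‖ := norm_sub_le _ _
      _ ≤ 2 * M := by linarith [h _ hg', h _ (Metric.mem_ball_self hr)]
  rw [← (NormedSpace.inclusionInDoubleDualLi (E := E) 𝕜).norm_map v]
  refine ContinuousLinearMap.opNorm_le_of_shell (c := (2 : 𝕜)) hr (by positivity) (by simp)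
    fun g hg_ge hg_lt => ?_
  rw [RCLike.norm_ofNat] at hg_ge
  calc ‖g v‖ ≤ 2 * M := hball g hg_lt
    _ = 4 * M / r * (r / 2) := by field_simp; ring
    _ ≤ 4 * M / r * ‖g‖ := by gcongr

theorem exists_polyBoundedBy_norm_of_forall_dual (y : ℕ → E)
    (h : ∀ f : StrongDual 𝕜 E, ∃ k, PolyBoundedBy k fun n => ‖f (y n)‖) :
    ∃ k, PolyBoundedBy k fun n => ‖y n‖ := by
  set S : ℕ → Set (StrongDual 𝕜 E) :=
    fun m => {f | ∀ n, ‖f (y n)‖ ≤ m * ((n + 1 : ℕ) : ℝ) ^ m}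
  have hS_closed : ∀ m, IsClosed (S m) := fun m => by
    simp only [S, Set.ofPred_forall]
    exact isClosed_iInter fun n =>
      isClosed_le (ContinuousLinearMap.apply 𝕜 𝕜 (y n)).continuous.norm continuous_const
  have hS_cover : ⋃ m, S m = Set.univ := Set.eq_univ_of_forall fun f => by
    obtain ⟨k, hk⟩ := h f
    exact Set.mem_iUnion.2 hk.exists_nat_forall_le_mul_pow
  obtain ⟨m, f₀, hf₀⟩ := nonempty_interior_of_iUnion_of_closed hS_closed hS_cover
  obtain ⟨ε, hε, hball⟩ := Metric.mem_nhds_iff.1 (mem_interior_iff_mem_nhds.1 hf₀)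
  refine ⟨m, PolyBoundedBy.iff_le_mul_pow.2 ⟨4 * m / ε, fun n => ?_⟩⟩
  exact (norm_le_of_forall_mem_ball_dual hε fun f hf => hball hf n).trans_eq (by ring)

end Dual

theorem Seminorm.exists_polyBoundedBy_of_forall_dual {𝕜 X : Type*} [RCLike 𝕜] [AddCommGroup X]
    [Module 𝕜 X] [TopologicalSpace X] [IsTopologicalAddGroup X] {p : Seminorm 𝕜 X}
    (hp : Continuous p) (u : ℕ → X)
    (h : ∀ x' : X →L[𝕜] 𝕜, ∃ k, PolyBoundedBy k fun n => ‖x' (u n)‖) :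
    ∃ k, PolyBoundedBy k fun n => p (u n) :=
  exists_polyBoundedBy_norm_of_forall_dual (fun n => Seminorm.Space.of p (u n))
    fun g => h (g.comp (Seminorm.Space.ofCLM hp))

def CountableNeighbourhoodProperty (𝕜 X : Type*) [NormedField 𝕜] [AddCommGroup X] [Module 𝕜 X]
    [TopologicalSpace X] : Prop :=
  ∀ αs : ℕ → Seminorm 𝕜 X, (∀ j, Continuous (αs j)) →
    ∃ (α : Seminorm 𝕜 X) (lam : ℕ → ℝ), Continuous α ∧ (∀ j, 0 < lam j) ∧
      ∀ j, ∀ y : X, αs j y ≤ lam j * α y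

theorem CountableNeighbourhoodProperty.exists_uniform_polyBoundedBy {𝕜 X : Type*} [NormedField 𝕜]
    [AddCommGroup X] [Module 𝕜 X] [TopologicalSpace X] (hX : CountableNeighbourhoodProperty 𝕜 X)
    (u : ℕ → X) (h : ∀ p : Seminorm 𝕜 X, Continuous p → ∃ k, PolyBoundedBy k fun n => p (u n)) :
    ∃ k₀, ∀ p : Seminorm 𝕜 X, Continuous p → PolyBoundedBy k₀ fun n => p (u n) := by
  by_contra! hbad
  choose αs hαs_cont hαs_unbdd using hbad
  obtain ⟨α, lam, hα, hlam, hle⟩ := hX αs hαs_cont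
  obtain ⟨k, hk⟩ := h α hα
  exact hαs_unbdd k (hk.of_le_mul (hlam k).le fun n => hle k (u n))

theorem cnp_uniform_polynomial_bound_general
    {X : Type*} [AddCommGroup X] [Module ℂ X] [TopologicalSpace X] [IsTopologicalAddGroup X]
    (hcnp : ∀ αs : ℕ → Seminorm ℂ X, (∀ j, Continuous (αs j)) →
      ∃ (α : Seminorm ℂ X) (lam : ℕ → ℝ), Continuous α ∧ (∀ j, 0 < lam j) ∧
        ∀ j, ∀ y : X, αs j y ≤ lam j * α y)
    (x : ℕ → X)
    (h : ∀ x' : X →L[ℂ] ℂ, ∃ k : ℕ, ∃ C : ℝ,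
      ∀ n : ℕ, (((n + 1 : ℕ) : ℝ) ^ k)⁻¹ * ‖x' (x (n + 1))‖ ≤ C) :
    ∃ k₀ : ℕ, ∀ α : Seminorm ℂ X, Continuous α → ∃ C : ℝ,
      ∀ n : ℕ, (((n + 1 : ℕ) : ℝ) ^ k₀)⁻¹ * α (x (n + 1)) ≤ C :=
  CountableNeighbourhoodProperty.exists_uniform_polyBoundedBy hcnp (fun n => x (n + 1))
    fun _ hα => Seminorm.exists_polyBoundedBy_of_forall_dual hα _ h

/-- Lemma on the countable neighbourhood property: if a sequence `(xₙ)` in a Hausdorff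
locally convex space `X` with the countable neighbourhood property is such that for every
continuous linear functional `x'` there is `k` with `supₙ n^{-k} |x'(xₙ)| < ∞`, then there
is `k₀` with `supₙ n^{-k₀} α(xₙ) < ∞` for every continuous seminorm `α`. -/
theorem cnp_uniform_polynomial_bound
    {X : Type*} [AddCommGroup X] [Module ℂ X] [TopologicalSpace X] [IsTopologicalAddGroup X]
    [ContinuousSMul ℂ X] [T2Space X] [Module ℝ X] [IsScalarTower ℝ ℂ X]
    [LocallyConvexSpace ℝ X]
    (hcnp : ∀ αs : ℕ → Seminorm ℂ X, (∀ j, Continuous (αs j)) →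
      ∃ (α : Seminorm ℂ X) (lam : ℕ → ℝ), Continuous α ∧ (∀ j, 0 < lam j) ∧
        ∀ j, ∀ y : X, αs j y ≤ lam j * α y)
    (x : ℕ → X)
    (h : ∀ x' : X →L[ℂ] ℂ, ∃ k : ℕ, ∃ C : ℝ,
      ∀ n : ℕ, (((n + 1 : ℕ) : ℝ) ^ k)⁻¹ * ‖x' (x (n + 1))‖ ≤ C) :
    ∃ k₀ : ℕ, ∀ α : Seminorm ℂ X, Continuous α → ∃ C : ℝ,
      ∀ n : ℕ, (((n + 1 : ℕ) : ℝ) ^ k₀)⁻¹ * α (x (n + 1)) ≤ C :=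
  cnp_uniform_polynomial_bound_general hcnp x h
end

section
/- Let X be a complex Banach space and let (a_n)_{n≥1} be a sequence in X. If for every continuous linear functional x' ∈ X' there exists s ∈ ℂ such that the scalar series Σ_n x'(a_n) n^{−s} converges, then there exists s ∈ ℂ such that the series Σ_n a_n n^{−s} converges in the norm of X. -/
/-!
Convergence of `∑ x'(aₙ) n^{-s}` bounds `x'(aₙ)` by `C n^{Re s}`, so the partial sums of
`∑ x'(aₙ) n^{-k}` are bounded as soon as `k > Re s + 1`. The dual is a Banach space covered by the
closed sets `{x' | all partial sums at exponent k are bounded by m}`, so by Baire one of them has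
interior, and a single exponent `k` then works for every `x'`. Banach–Steinhaus in the bidual turns
this weak boundedness of the partial sums of `∑ aₙ n^{-k}` into norm boundedness, and Dirichlet's
test with the weights `1/n` gives convergence at `s = k + 1`.
-/

open Filter Finset Topology

section UniformBoundedness

variable {𝕜 E F ι : Type*} [NontriviallyNormedField 𝕜] [NormedAddCommGroup E] [NormedSpace 𝕜 E]
  [CompleteSpace E] [SeminormedAddCommGroup F] [NormedSpace 𝕜 F]

theorem exists_index_pointwise_bounded (T : ℕ → ι → E →L[𝕜] F)
    (h : ∀ x, ∃ k C, ∀ i, ‖T k i x‖ ≤ C) : ∃ k, ∀ x, ∃ C, ∀ i, ‖T k i x‖ ≤ C := by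
  let A : ℕ × ℕ → Set E := fun p => {x | ∀ i, ‖T p.1 i x‖ ≤ p.2}
  have hA_closed : ∀ p, IsClosed (A p) := fun p => by
    simp only [A, Set.ofPred_forall]
    exact isClosed_iInter fun i => isClosed_le (T p.1 i).continuous.norm continuous_const
  have hA_cover : ⋃ p, A p = Set.univ := Set.eq_univ_of_forall fun x => by
    obtain ⟨k, C, hC⟩ := h x
    exact Set.mem_iUnion.mpr ⟨(k, ⌈C⌉₊), fun i => (hC i).trans (Nat.le_ceil C)⟩
  obtain ⟨⟨k, m⟩, x₀, hx₀⟩ := nonempty_interior_of_iUnion_of_closed hA_closed hA_cover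
  refine ⟨k, fun x => ?_⟩
  have hnear : ∀ᶠ t : 𝕜 in 𝓝[≠] 0, x₀ + t • x ∈ A (k, m) := by
    refine nhdsWithin_le_nhds
      ((Continuous.tendsto ?_ 0).eventually (mem_interior_iff_mem_nhds.mp ?_))
    · fun_prop
    · simpa using hx₀
  obtain ⟨t, ht_mem, ht0⟩ := (hnear.and self_mem_nhdsWithin).exists
  refine ⟨‖t‖⁻¹ * (m + m), fun i => ?_⟩
  have hx : T k i x = t⁻¹ • (T k i (x₀ + t • x) - T k i x₀) := by
    rw [map_add, map_smul, add_sub_cancel_left, smul_smul, inv_mul_cancel₀ ht0, one_smul]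
  rw [hx, norm_smul, norm_inv]
  gcongr
  exact (norm_sub_le _ _).trans (add_le_add (ht_mem i) (interior_subset hx₀ i))

end UniformBoundedness

theorem exists_norm_le_of_forall_dual_bounded {𝕜 X ι : Type*} [RCLike 𝕜] [NormedAddCommGroup X]
    [NormedSpace 𝕜 X] {S : ι → X} (h : ∀ x' : StrongDual 𝕜 X, ∃ C, ∀ i, ‖x' (S i)‖ ≤ C) :
    ∃ C, ∀ i, ‖S i‖ ≤ C := by
  obtain ⟨C, hC⟩ :=
    banach_steinhaus (g := fun i => NormedSpace.inclusionInDoubleDual 𝕜 X (S i)) h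
  exact ⟨C, fun i => (NormedSpace.inclusionInDoubleDualLi 𝕜).norm_map (S i) ▸ hC i⟩

theorem exists_norm_le_of_tendsto_sum_range {E : Type*} [SeminormedAddCommGroup E] {f : ℕ → E}
    {L : E} (h : Tendsto (fun N => ∑ n ∈ range N, f n) atTop (𝓝 L)) : ∃ C, ∀ n, ‖f n‖ ≤ C := by
  obtain ⟨B, hB⟩ := isBounded_iff_forall_norm_le.mp (Metric.isBounded_range_of_tendsto _ h)
  refine ⟨B + B, fun n => ?_⟩
  rw [← add_sub_cancel_left (∑ i ∈ range n, f i) (f n), ← sum_range_succ]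
  exact (norm_sub_le _ _).trans (add_le_add (hB _ ⟨_, rfl⟩) (hB _ ⟨_, rfl⟩))

section Dirichlet

variable {X : Type*} [NormedAddCommGroup X] [NormedSpace ℂ X]

theorem Complex.cpow_neg_smul_eq_cpow_neg_sub_smul {z : ℂ} (hz : z ≠ 0) (s w : ℂ) (x : X) :
    z ^ (-w) • x = z ^ (-(w - s)) • z ^ (-s) • x := by
  rw [smul_smul, ← Complex.cpow_add _ _ hz, show -(w - s) + -s = -w by ring]

noncomputable def dirichletPartialSum (a : ℕ → X) (s : ℂ) (N : ℕ) : X :=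
  ∑ n ∈ range N, ((n + 1 : ℕ) : ℂ) ^ (-s) • a (n + 1)

theorem ContinuousLinearMap.map_dirichletPartialSum {Y : Type*} [NormedAddCommGroup Y]
    [NormedSpace ℂ Y] (f : X →L[ℂ] Y) (a : ℕ → X) (s : ℂ) (N : ℕ) :
    f (dirichletPartialSum a s N) = dirichletPartialSum (f ∘ a) s N := by
  simp [dirichletPartialSum, map_sum, map_smul]

theorem exists_norm_dirichletPartialSum_le_of_norm_le {a : ℕ → X} {s w : ℂ} {C : ℝ}
    (hC : ∀ n, ‖((n + 1 : ℕ) : ℂ) ^ (-s) • a (n + 1)‖ ≤ C) (hw : s.re + 1 < w.re) :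
    ∃ B, ∀ N, ‖dirichletPartialSum a w N‖ ≤ B := by
  set u : ℕ → ℝ := fun n => C * ((n + 1 : ℕ) : ℝ) ^ (-(w - s).re)
  have hu : Summable u := by
    refine .mul_left C ?_
    exact_mod_cast (summable_nat_add_iff 1).mpr
      (Real.summable_nat_rpow.mpr (by simp only [Complex.sub_re]; linarith))
  have hterm : ∀ n, ‖((n + 1 : ℕ) : ℂ) ^ (-w) • a (n + 1)‖ ≤ u n := fun n => by
    rw [Complex.cpow_neg_smul_eq_cpow_neg_sub_smul (Nat.cast_ne_zero.mpr n.succ_ne_zero) s,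
      norm_smul, Complex.norm_natCast_cpow_of_pos n.succ_pos, mul_comm, Complex.neg_re]
    exact mul_le_mul_of_nonneg_right (hC n) (by positivity)
  refine ⟨∑' n, u n, fun N => (norm_sum_le _ _).trans ?_⟩
  exact (sum_le_sum fun n _ => hterm n).trans
    (hu.sum_le_tsum _ fun n _ => (norm_nonneg _).trans (hterm n))

theorem exists_norm_dirichletPartialSum_le_of_tendsto {a : ℕ → X} {s w : ℂ} {L : X}
    (h : Tendsto (dirichletPartialSum a s) atTop (𝓝 L)) (hw : s.re + 1 < w.re) :
    ∃ B, ∀ N, ‖dirichletPartialSum a w N‖ ≤ B :=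
  have ⟨_, hC⟩ := exists_norm_le_of_tendsto_sum_range h
  exists_norm_dirichletPartialSum_le_of_norm_le hC hw

theorem exists_tendsto_dirichletPartialSum_add_one [CompleteSpace X] {a : ℕ → X} {s : ℂ}
    {C : ℝ} (hC : ∀ N, ‖dirichletPartialSum a s N‖ ≤ C) :
    ∃ L, Tendsto (dirichletPartialSum a (s + 1)) atTop (𝓝 L) := by
  have hanti : Antitone fun n : ℕ => ((n + 1 : ℕ) : ℝ)⁻¹ := fun m n hmn =>
    inv_anti₀ (by positivity) (by exact_mod_cast Nat.succ_le_succ hmn)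
  have hzero : Tendsto (fun n : ℕ => ((n + 1 : ℕ) : ℝ)⁻¹) atTop (𝓝 0) :=
    tendsto_inv_atTop_zero.comp (tendsto_natCast_atTop_atTop.comp (tendsto_add_atTop_nat 1))
  refine cauchySeq_tendsto_of_complete ?_
  convert hanti.cauchySeq_series_mul_of_tendsto_zero_of_bounded hzero hC using 1
  ext N
  refine sum_congr rfl fun n _ => ?_
  rw [Complex.cpow_neg_smul_eq_cpow_neg_sub_smul (Nat.cast_ne_zero.mpr n.succ_ne_zero) s,
    RCLike.real_smul_eq_coe_smul (K := ℂ), add_sub_cancel_left, Complex.cpow_neg_one]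
  push_cast
  rfl

end Dirichlet

/-- In a complex Banach space, if each scalar Dirichlet series `∑ₙ x'(aₙ) n^{-s}`
converges somewhere, then the vector-valued Dirichlet series converges somewhere in norm. -/
theorem dirichlet_finite_abscissa_of_weak_banach
    {X : Type*} [NormedAddCommGroup X] [NormedSpace ℂ X] [CompleteSpace X]
    (a : ℕ → X)
    (h : ∀ x' : X →L[ℂ] ℂ, ∃ s : ℂ, ∃ L : ℂ, Tendsto
      (fun N : ℕ => ∑ n ∈ Finset.range N, (((n + 1 : ℕ) : ℂ) ^ (-s)) * x' (a (n + 1)))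
      atTop (𝓝 L)) :
    ∃ s : ℂ, ∃ L : X, Tendsto
      (fun N : ℕ => ∑ n ∈ Finset.range N, (((n + 1 : ℕ) : ℂ) ^ (-s)) • a (n + 1))
      atTop (𝓝 L) := by
  obtain ⟨k, hk⟩ : ∃ k : ℕ, ∀ x' : StrongDual ℂ X, ∃ C, ∀ N,
      ‖x' (dirichletPartialSum a k N)‖ ≤ C := by
    refine exists_index_pointwise_bounded
      (fun k N => NormedSpace.inclusionInDoubleDual ℂ X (dirichletPartialSum a k N)) fun x' => ?_
    obtain ⟨s, L, hs⟩ := h x'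
    have hs' : Tendsto (dirichletPartialSum (x' ∘ a) s) atTop (𝓝 L) := hs
    obtain ⟨k, hk⟩ := exists_nat_gt (s.re + 1)
    have hk' : s.re + 1 < (k : ℂ).re := by rwa [Complex.natCast_re]
    obtain ⟨C, hC⟩ := exists_norm_dirichletPartialSum_le_of_tendsto hs' hk'
    refine ⟨k, C, fun N => ?_⟩
    rw [NormedSpace.dual_def, ContinuousLinearMap.map_dirichletPartialSum]
    exact hC N
  obtain ⟨C, hC⟩ := exists_norm_le_of_forall_dual_bounded hk
  exact ⟨k + 1, exists_tendsto_dirichletPartialSum_add_one hC⟩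
end

section
/- Let X be a complex Banach space, (a_n)_{n≥1} a sequence in X, and r ∈ ℝ. If for every continuous linear functional x' ∈ X' the scalar Dirichlet series Σ_n x'(a_n) n^{−s} converges uniformly on the half-plane {s ∈ ℂ : Re s > r}, then for every r₀ > r the vector-valued series Σ_n a_n n^{−s} converges uniformly in the norm of X on {s ∈ ℂ : Re s > r₀}. (The abscissa of uniform convergence equals the abscissa of weak uniform convergence.) -/
open Filter Finset Topology

/-- The abscissa of uniform convergence equals the abscissa of weak uniform convergence:
if every scalar series `∑ₙ x'(aₙ) n^{-s}` converges uniformly on `{Re s > r}`, then the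
vector-valued series converges uniformly in norm on `{Re s > r₀}` for every `r₀ > r`. -/
theorem dirichlet_uniform_convergence_of_weak_uniform
    {X : Type*} [NormedAddCommGroup X] [NormedSpace ℂ X] [CompleteSpace X]
    (a : ℕ → X) (r : ℝ)
    (h : ∀ x' : X →L[ℂ] ℂ, ∃ g : ℂ → ℂ, TendstoUniformlyOn
      (fun (N : ℕ) (s : ℂ) =>
        ∑ n ∈ Finset.range N, (((n + 1 : ℕ) : ℂ) ^ (-s)) * x' (a (n + 1)))
      g atTop {s : ℂ | r < s.re})
    (r₀ : ℝ) (hr₀ : r < r₀) :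
    ∃ D : ℂ → X, TendstoUniformlyOn
      (fun (N : ℕ) (s : ℂ) => ∑ n ∈ Finset.range N, (((n + 1 : ℕ) : ℂ) ^ (-s)) • a (n + 1))
      D atTop {s : ℂ | r₀ < s.re} := by
  classical
  set F : ℕ → ℂ → X :=
    fun N s => ∑ n ∈ Finset.range N, (((n + 1 : ℕ) : ℂ) ^ (-s)) • a (n + 1) with hFdef
  -- Step 1: each scalar sequence of partial sums is uniformly bounded on `{Re s > r}`.
  have step1 : ∀ x' : X →L[ℂ] ℂ, ∃ B, ∀ N, ∀ s ∈ {s : ℂ | r < s.re}, ‖x' (F N s)‖ ≤ B := by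
    intro x'
    have hx : ∀ N s, x' (F N s) =
        ∑ n ∈ Finset.range N, (((n + 1 : ℕ) : ℂ) ^ (-s)) * x' (a (n + 1)) := by
      intro N s
      simp [hFdef, map_sum, map_smul, smul_eq_mul]
    obtain ⟨g, hg⟩ := h x'
    have hcoef : ∀ (n : ℕ) (s : ℂ), r < s.re →
        ‖(((n + 1 : ℕ) : ℂ) ^ (-s))‖ ≤ ((n + 1 : ℕ) : ℝ) ^ (-r) := by
      intro n s hs
      rw [Complex.norm_natCast_cpow_of_pos (Nat.succ_pos n)]
      refine Real.rpow_le_rpow_of_exponent_le ?_ (by simp; linarith)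
      exact_mod_cast Nat.one_le_iff_ne_zero.mpr (Nat.succ_ne_zero n)
    rw [Metric.tendstoUniformlyOn_iff] at hg
    obtain ⟨N₀, hN₀⟩ := Filter.eventually_atTop.mp (hg 1 one_pos)
    set B₀ : ℝ := ∑ n ∈ Finset.range N₀, ((n + 1 : ℕ) : ℝ) ^ (-r) * ‖x' (a (n + 1))‖ with hB₀def
    have hsmall : ∀ N ≤ N₀, ∀ s ∈ {s : ℂ | r < s.re},
        ‖∑ n ∈ Finset.range N, (((n + 1 : ℕ) : ℂ) ^ (-s)) * x' (a (n + 1))‖ ≤ B₀ := by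
      intro N hN s hs
      calc ‖∑ n ∈ Finset.range N, (((n + 1 : ℕ) : ℂ) ^ (-s)) * x' (a (n + 1))‖
          ≤ ∑ n ∈ Finset.range N, ‖(((n + 1 : ℕ) : ℂ) ^ (-s)) * x' (a (n + 1))‖ :=
            norm_sum_le _ _
        _ ≤ ∑ n ∈ Finset.range N, ((n + 1 : ℕ) : ℝ) ^ (-r) * ‖x' (a (n + 1))‖ := by
            refine Finset.sum_le_sum fun n _ => ?_
            rw [norm_mul]
            exact mul_le_mul_of_nonneg_right (hcoef n s hs) (norm_nonneg _)
        _ ≤ B₀ := by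
            refine Finset.sum_le_sum_of_subset_of_nonneg
              (Finset.range_subset_range.mpr hN) fun n _ _ => ?_
            positivity
    refine ⟨B₀ + 2, ?_⟩
    intro N s hs
    rw [hx]
    rcases le_or_gt N N₀ with hN | hN
    · linarith [hsmall N hN s hs]
    · have h1 := hN₀ N hN.le s hs
      have h2 := hN₀ N₀ le_rfl s hs
      have h3 := hsmall N₀ le_rfl s hs
      calc ‖∑ n ∈ Finset.range N, (((n + 1 : ℕ) : ℂ) ^ (-s)) * x' (a (n + 1))‖
          ≤ dist (∑ n ∈ Finset.range N, (((n + 1 : ℕ) : ℂ) ^ (-s)) * x' (a (n + 1))) (g s)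
            + dist (g s) (∑ n ∈ Finset.range N₀, (((n + 1 : ℕ) : ℂ) ^ (-s)) * x' (a (n + 1)))
            + ‖∑ n ∈ Finset.range N₀, (((n + 1 : ℕ) : ℂ) ^ (-s)) * x' (a (n + 1))‖ := by
              have := dist_triangle
                (∑ n ∈ Finset.range N, (((n + 1 : ℕ) : ℂ) ^ (-s)) * x' (a (n + 1)))
                (g s) (∑ n ∈ Finset.range N₀, (((n + 1 : ℕ) : ℂ) ^ (-s)) * x' (a (n + 1)))
              have hd : ∀ z w : ℂ, ‖z‖ ≤ dist z w + ‖w‖ := fun z w => by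
                simpa [dist_eq_norm, add_comm] using norm_le_insert' z w
              calc ‖_‖ ≤ dist (∑ n ∈ Finset.range N, (((n + 1 : ℕ) : ℂ) ^ (-s)) * x' (a (n + 1)))
                    (∑ n ∈ Finset.range N₀, (((n + 1 : ℕ) : ℂ) ^ (-s)) * x' (a (n + 1)))
                    + ‖∑ n ∈ Finset.range N₀, (((n + 1 : ℕ) : ℂ) ^ (-s)) * x' (a (n + 1))‖ :=
                    hd _ _
                _ ≤ _ := by linarith
        _ ≤ B₀ + 2 := by
            rw [dist_comm] at h1
            linarith
  -- Step 2: Banach–Steinhaus gives a uniform norm bound on the partial sums on `{Re s > r}`.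
  obtain ⟨C, hC0, hC⟩ : ∃ C, 0 ≤ C ∧ ∀ N, ∀ s ∈ {s : ℂ | r < s.re}, ‖F N s‖ ≤ C := by
    set gg : ℕ × {s : ℂ | r < s.re} → StrongDual ℂ (StrongDual ℂ X) :=
      fun i => NormedSpace.inclusionInDoubleDual ℂ X (F i.1 i.2) with hgg
    have hpt : ∀ x' : StrongDual ℂ X, ∃ C, ∀ i, ‖gg i x'‖ ≤ C := by
      intro x'
      obtain ⟨B, hB⟩ := step1 x'
      exact ⟨B, fun i => by simpa [hgg] using hB i.1 i.2 i.2.2⟩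
    obtain ⟨C, hCC⟩ := banach_steinhaus hpt
    refine ⟨max C 0, le_max_right _ _, ?_⟩
    intro N s hs
    refine NormedSpace.norm_le_dual_bound ℂ _ (le_max_right _ _) fun f => ?_
    have h1 : ‖gg (N, ⟨s, hs⟩) f‖ ≤ C * ‖f‖ :=
      (gg (N, ⟨s, hs⟩)).le_of_opNorm_le (hCC _) f
    have h2 : gg (N, ⟨s, hs⟩) f = f (F N s) := rfl
    rw [h2] at h1
    calc ‖f (F N s)‖ ≤ C * ‖f‖ := h1
      _ ≤ max C 0 * ‖f‖ := mul_le_mul_of_nonneg_right (le_max_left _ _) (norm_nonneg _)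
  -- Step 3: Abel summation gives uniform Cauchyness on `{Re s > r₀}`.
  set δ : ℝ := (r₀ - r) / 2 with hδdef
  have hδ : 0 < δ := by simp only [hδdef]; linarith
  set φ : ℕ → ℝ := fun n => ((n : ℝ) + 1) ^ (-δ) with hφdef
  have hφ0 : ∀ n, 0 ≤ φ n := fun n => Real.rpow_nonneg (by positivity) _
  have hφanti : ∀ m n, m ≤ n → φ n ≤ φ m := by
    intro m n hmn
    have hle : (m : ℝ) ≤ (n : ℝ) := Nat.cast_le.mpr hmn
    exact Real.rpow_le_rpow_of_nonpos (by positivity) (by linarith) (by linarith)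
  set c : ℕ → ℂ := fun n => ((φ n : ℝ) : ℂ) with hcdef
  have hcnorm : ∀ n, ‖c n‖ = φ n := fun n => by
    simp [hcdef, Complex.norm_real, abs_of_nonneg (hφ0 n)]
  have hsplit : ∀ (n : ℕ) (s : ℂ),
      (((n + 1 : ℕ) : ℂ) ^ (-s)) = c n * (((n + 1 : ℕ) : ℂ) ^ (-(s - (δ : ℂ)))) := by
    intro n s
    have hb : ((n + 1 : ℕ) : ℂ) ≠ 0 := by exact_mod_cast Nat.succ_ne_zero n
    have h1 : (-s) = (-(δ : ℂ)) + (-(s - (δ : ℂ))) := by ring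
    rw [h1, Complex.cpow_add _ _ hb]
    congr 1
    have : ((n + 1 : ℕ) : ℂ) = (((n : ℝ) + 1 : ℝ) : ℂ) := by push_cast; ring
    rw [this, hcdef]
    rw [show (-(δ : ℂ)) = ((-δ : ℝ) : ℂ) by push_cast; ring]
    rw [← Complex.ofReal_cpow (by positivity)]
  -- Abel summation identity
  have habel : ∀ (s : ℂ) (N : ℕ), F N s =
      c (N - 1) • F N (s - δ) -
        ∑ i ∈ Finset.range (N - 1), (c (i + 1) - c i) • F (i + 1) (s - δ) := by
    intro s N
    have : F N s = ∑ n ∈ Finset.range N,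
        c n • ((((n + 1 : ℕ) : ℂ) ^ (-(s - (δ : ℂ)))) • a (n + 1)) := by
      refine Finset.sum_congr rfl fun n _ => ?_
      rw [hsplit n s, mul_smul]
    rw [this]
    exact Finset.sum_range_by_parts c
      (fun n => (((n + 1 : ℕ) : ℂ) ^ (-(s - (δ : ℂ)))) • a (n + 1)) N
  -- difference bound
  have hdiff : ∀ (M N : ℕ), M ≤ N → ∀ s ∈ {s : ℂ | r₀ < s.re},
      ‖F N s - F M s‖ ≤ 3 * C * φ (M - 1) := by
    intro M N hMN s hs
    have hw : (s - (δ : ℂ)) ∈ {s : ℂ | r < s.re} := by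
      simp only [Set.mem_setOf_eq] at hs ⊢
      simp only [Complex.sub_re, Complex.ofReal_re]
      simp only [hδdef]
      linarith
    have hCb : ∀ k, ‖F k (s - δ)‖ ≤ C := fun k => hC k _ hw
    have h1 : F N s - F M s =
        (c (N - 1) • F N (s - δ) - c (M - 1) • F M (s - δ)) -
          ∑ i ∈ Finset.Ico (M - 1) (N - 1), (c (i + 1) - c i) • F (i + 1) (s - δ) := by
      rw [habel s N, habel s M,
        Finset.sum_Ico_eq_sub _ (Nat.sub_le_sub_right hMN 1)]
      abel
    rw [h1]
    have hsum : ‖∑ i ∈ Finset.Ico (M - 1) (N - 1), (c (i + 1) - c i) • F (i + 1) (s - δ)‖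
        ≤ C * φ (M - 1) := by
      calc ‖∑ i ∈ Finset.Ico (M - 1) (N - 1), (c (i + 1) - c i) • F (i + 1) (s - δ)‖
          ≤ ∑ i ∈ Finset.Ico (M - 1) (N - 1), ‖(c (i + 1) - c i) • F (i + 1) (s - δ)‖ :=
            norm_sum_le _ _
        _ ≤ ∑ i ∈ Finset.Ico (M - 1) (N - 1), (φ i - φ (i + 1)) * C := by
            refine Finset.sum_le_sum fun i _ => ?_
            rw [norm_smul]
            have hle2 : φ (i + 1) ≤ φ i := hφanti i (i + 1) (Nat.le_succ i)
            have hnc : ‖c (i + 1) - c i‖ = φ i - φ (i + 1) := by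
              simp only [hcdef, ← Complex.ofReal_sub, Complex.norm_real, Real.norm_eq_abs]
              rw [abs_of_nonpos (by linarith)]
              ring
            rw [hnc]
            exact mul_le_mul_of_nonneg_left (hCb _) (by linarith)
        _ = (∑ i ∈ Finset.Ico (M - 1) (N - 1), (φ i - φ (i + 1))) * C := by
            rw [Finset.sum_mul]
        _ ≤ φ (M - 1) * C := by
            refine mul_le_mul_of_nonneg_right ?_ hC0
            rw [Finset.sum_Ico_eq_sub _ (Nat.sub_le_sub_right hMN 1),
              Finset.sum_range_sub' φ, Finset.sum_range_sub' φ]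
            have := hφ0 (N - 1)
            have := hφ0 (M - 1)
            linarith
        _ = C * φ (M - 1) := by ring
    have hφNM : φ (N - 1) ≤ φ (M - 1) := hφanti _ _ (Nat.sub_le_sub_right hMN 1)
    calc ‖(c (N - 1) • F N (s - δ) - c (M - 1) • F M (s - δ)) -
          ∑ i ∈ Finset.Ico (M - 1) (N - 1), (c (i + 1) - c i) • F (i + 1) (s - δ)‖
        ≤ ‖c (N - 1) • F N (s - δ) - c (M - 1) • F M (s - δ)‖ +
          ‖∑ i ∈ Finset.Ico (M - 1) (N - 1), (c (i + 1) - c i) • F (i + 1) (s - δ)‖ :=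
          norm_sub_le _ _
      _ ≤ (‖c (N - 1) • F N (s - δ)‖ + ‖c (M - 1) • F M (s - δ)‖) + C * φ (M - 1) := by
          linarith [norm_sub_le (c (N - 1) • F N (s - δ)) (c (M - 1) • F M (s - δ)), hsum]
      _ ≤ (φ (N - 1) * C + φ (M - 1) * C) + C * φ (M - 1) := by
          have e1 : ‖c (N - 1) • F N (s - δ)‖ ≤ φ (N - 1) * C := by
            rw [norm_smul, hcnorm]
            exact mul_le_mul_of_nonneg_left (hCb _) (hφ0 _)
          have e2 : ‖c (M - 1) • F M (s - δ)‖ ≤ φ (M - 1) * C := by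
            rw [norm_smul, hcnorm]
            exact mul_le_mul_of_nonneg_left (hCb _) (hφ0 _)
          linarith
      _ ≤ 3 * C * φ (M - 1) := by nlinarith [hφNM, hC0, hφ0 (M - 1)]
  -- uniform Cauchy
  have hcauchy : UniformCauchySeqOn F atTop {s : ℂ | r₀ < s.re} := by
    rw [Metric.uniformCauchySeqOn_iff]
    intro ε hε
    have htend : Filter.Tendsto (fun M : ℕ => 3 * C * φ (M - 1)) atTop (𝓝 0) := by
      have h0 : Filter.Tendsto (fun x : ℝ => x ^ (-δ)) atTop (𝓝 0) := tendsto_rpow_neg_atTop hδ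
      have h1 : Filter.Tendsto (fun M : ℕ => ((M - 1 : ℕ) : ℝ) + 1) atTop atTop := by
        apply Filter.tendsto_atTop_add_const_right
        exact tendsto_natCast_atTop_atTop.comp (Filter.tendsto_sub_atTop_nat 1)
      have := (h0.comp h1).const_mul (3 * C)
      simpa using this
    obtain ⟨M₀, hM₀⟩ := Filter.eventually_atTop.mp (htend.eventually (gt_mem_nhds hε))
    refine ⟨M₀, fun m hm n hn s hs => ?_⟩
    rcases le_total m n with hmn | hmn
    · calc dist (F m s) (F n s) = ‖F n s - F m s‖ := by rw [dist_eq_norm, norm_sub_rev]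
        _ ≤ 3 * C * φ (m - 1) := hdiff m n hmn s hs
        _ < ε := hM₀ m hm
    · calc dist (F m s) (F n s) = ‖F m s - F n s‖ := by rw [dist_eq_norm]
        _ ≤ 3 * C * φ (n - 1) := hdiff n m hmn s hs
        _ < ε := hM₀ n hn
  have hlim : ∀ s ∈ {s : ℂ | r₀ < s.re}, ∃ L, Filter.Tendsto (fun N => F N s) atTop (𝓝 L) :=
    fun s hs => cauchySeq_tendsto_of_complete (hcauchy.cauchySeq hs)
  refine ⟨fun s => if hs : s ∈ {s : ℂ | r₀ < s.re} then (hlim s hs).choose else 0, ?_⟩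
  exact hcauchy.tendstoUniformlyOn_of_tendsto fun s hs => by
    rw [dif_pos hs]; exact (hlim s hs).choose_spec
end

section
/- Every infinite-dimensional complex Banach space X satisfies G_a(X) ≥ 1/2, where G_a(X) is the gap for absolute convergence of Dirichlet series in X. -/
/-
An infinite-dimensional space contains, for every `m`, a Dvoretzky–Rogers family: vectors
`x₁, …, x_m` of norm between `1/2` and `1` with `∑ |x'(xᵢ)| ≤ √m ‖x'‖` for every functional `x'`.
To find one, take a `2m`-dimensional subspace `E` and an operator `T : ℓ₂^{2m} → E` of norm `≤ 1`
maximising `|det T|`. Comparing `T` with the rescaled `T ∘ (1 + t P_K)` shows that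
`‖T|_K‖ ≥ dim K / 2m` on every subspace `K`, so a greedy orthonormal sequence `uᵢ` has
`‖T uᵢ‖ ≥ 1/2`; the weak bound for `xᵢ = T uᵢ` is Cauchy–Schwarz plus Bessel.

Putting such a family with `m = 2^k` on the dyadic block `2^k ≤ n < 2^(k+1)` gives coefficients
with `1/2 ≤ ‖aₙ‖ ≤ 1`, hence `σ_c ≤ 1` and `σ_a ≥ 1`, while the block sums of `|x'(aₙ)|` are
`O(2^(k/2))`, hence `σ_a(x'(D)) ≤ 1/2` for every `x'`.
-/

open Filter Finset Topology

/-- The abscissa of convergence `σ_c(D)` of the Dirichlet series `D = ∑ₙ aₙ n^{-s}`,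
as an extended real number. -/
noncomputable def dirichletSigmaC {X : Type*} [NormedAddCommGroup X] [NormedSpace ℂ X]
    (a : ℕ → X) : EReal :=
  sInf { x : EReal | ∃ r : ℝ, x = (r : EReal) ∧ ∀ s : ℂ, r < s.re →
    ∃ L : X, Tendsto
      (fun N : ℕ => ∑ n ∈ Finset.range N, (((n + 1 : ℕ) : ℂ) ^ (-s)) • a (n + 1))
      atTop (𝓝 L) }

/-- The abscissa of absolute convergence `σ_a(D)` of `D = ∑ₙ aₙ n^{-s}`. -/
noncomputable def dirichletSigmaA {X : Type*} [SeminormedAddCommGroup X]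
    (a : ℕ → X) : EReal :=
  sInf { x : EReal | ∃ r : ℝ, x = (r : EReal) ∧ ∀ σ : ℝ, r < σ →
    Summable (fun n : ℕ => ‖a (n + 1)‖ * ((n + 1 : ℕ) : ℝ) ^ (-σ)) }

/-- The abscissa of weak absolute convergence `σ_a^w(D) = sup_{x'} σ_a(x'(D))`. -/
noncomputable def dirichletSigmaAw {X : Type*} [NormedAddCommGroup X] [NormedSpace ℂ X]
    (a : ℕ → X) : EReal :=
  ⨆ x' : X →L[ℂ] ℂ, dirichletSigmaA (fun n => x' (a n))

/-- The gap for absolute convergence of Dirichlet series in `X`: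
`G_a(X) = sup_D (σ_a(D) - σ_a^w(D))`, the supremum over all Dirichlet series with
coefficients in `X` and finite abscissa of convergence. -/
noncomputable def dirichletGapA (X : Type*) [NormedAddCommGroup X] [NormedSpace ℂ X] :
    EReal :=
  sSup { g : EReal | ∃ a : ℕ → X, dirichletSigmaC a < ⊤ ∧
    g = dirichletSigmaA a - dirichletSigmaAw a }

open Module Metric

lemma natCast_le_mul_of_forall_one_add_pow_le {d N : ℕ} {c : ℝ}
    (h : ∀ t : ℝ, 0 < t → (1 + t) ^ d ≤ (1 + t * c) ^ N) : (d : ℝ) ≤ N * c := by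
  have hd : HasDerivAt (fun t : ℝ => (1 + t) ^ d) d 0 := by
    simpa using ((hasDerivAt_id (0 : ℝ)).const_add 1).fun_pow d
  have hN : HasDerivAt (fun t : ℝ => (1 + t * c) ^ N) (N * c) 0 := by
    simpa using (((hasDerivAt_id (0 : ℝ)).mul_const c).const_add 1).fun_pow N
  refine le_of_tendsto_of_tendsto hd.tendsto_slope_zero_right hN.tendsto_slope_zero_right ?_
  filter_upwards [self_mem_nhdsWithin] with t (ht : 0 < t)
  simp only [zero_add, zero_mul, add_zero, one_pow, smul_eq_mul]
  exact mul_le_mul_of_nonneg_left (by linarith [h t ht]) (inv_nonneg.2 ht.le)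

section InnerProductSpace

variable {𝕜 V : Type*} [RCLike 𝕜] [NormedAddCommGroup V] [InnerProductSpace 𝕜 V]

theorem exists_orthonormal_forall_of_exists_mem_orthogonal {P : V → Prop} {m : ℕ}
    (h : ∀ K : Submodule 𝕜 V, finrank 𝕜 K < m → ∃ w ∈ Kᗮ, ‖w‖ = 1 ∧ P w) :
    ∃ u : Fin m → V, Orthonormal 𝕜 u ∧ ∀ i, P (u i) := by
  induction m with
  | zero => exact ⟨Fin.elim0, Orthonormal.of_isEmpty _, fun i => i.elim0⟩
  | succ m ih =>
    obtain ⟨u, hu, hPu⟩ := ih fun K hK => h K (hK.trans m.lt_succ_self)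
    obtain ⟨w, hw, hw1, hPw⟩ := h (Submodule.span 𝕜 (Set.range u))
      (Nat.lt_succ_of_le ((finrank_range_le_card u).trans_eq (Fintype.card_fin m)))
    refine ⟨Matrix.vecCons w u, orthonormal_vecCons_iff.2 ⟨hw1, fun i => ?_, hu⟩,
      Fin.cases hPw hPu⟩
    exact Submodule.inner_left_of_mem_orthogonal (Submodule.subset_span (Set.mem_range_self i)) hw

theorem Orthonormal.sum_norm_apply_le [CompleteSpace V] {ι : Type*} [Fintype ι] {u : ι → V}
    (hu : Orthonormal 𝕜 u) (φ : V →L[𝕜] 𝕜) :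
    ∑ i, ‖φ (u i)‖ ≤ √(Fintype.card ι) * ‖φ‖ := by
  set w := (InnerProductSpace.toDual 𝕜 V).symm φ
  have hφ (i : ι) : ‖φ (u i)‖ = ‖inner 𝕜 (u i) w‖ := by
    rw [← InnerProductSpace.toDual_symm_apply, norm_inner_symm]
  have hw : ‖w‖ = ‖φ‖ := (InnerProductSpace.toDual 𝕜 V).symm.norm_map φ
  refine (pow_le_pow_iff_left₀ (sum_nonneg fun i _ => norm_nonneg _) (by positivity)
    two_ne_zero).1 ?_
  calc (∑ i, ‖φ (u i)‖) ^ 2 ≤ Fintype.card ι * ∑ i, ‖φ (u i)‖ ^ 2 :=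
        sq_sum_le_card_mul_sum_sq
    _ ≤ Fintype.card ι * ‖w‖ ^ 2 := by
        simp only [hφ]
        gcongr
        exact hu.sum_inner_products_le w
    _ = (√(Fintype.card ι) * ‖φ‖) ^ 2 := by
        rw [mul_pow, Real.sq_sqrt (Nat.cast_nonneg _), hw]

variable [FiniteDimensional 𝕜 V]

lemma det_id_add_smul_starProjection (K : Submodule 𝕜 V) (t : 𝕜) :
    (ContinuousLinearMap.id 𝕜 V + t • K.starProjection).det = (1 + t) ^ finrank 𝕜 K := by
  let e := K.prodEquivOfIsCompl Kᗮ K.isCompl_orthogonal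
  have hconj : (e.symm : V →ₗ[𝕜] K × Kᗮ) ∘ₗ
      ((ContinuousLinearMap.id 𝕜 V + t • K.starProjection : V →L[𝕜] V) : V →ₗ[𝕜] V) ∘ₗ
      (e : K × Kᗮ →ₗ[𝕜] V) = LinearMap.prodMap ((1 + t) • LinearMap.id) LinearMap.id := by
    have hperp (x : Kᗮ) : K.starProjection x = 0 := K.starProjection_apply_eq_zero_iff.2 x.2
    ext x <;> simp [e, add_smul, hperp]
  rw [ContinuousLinearMap.det, ← LinearMap.det_conj _ e.symm, LinearEquiv.symm_symm, hconj,
    LinearMap.det_prodMap, LinearMap.det_smul, LinearMap.det_id, LinearMap.det_id, mul_one, mul_one]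

variable {E : Type*} [NormedAddCommGroup E] [NormedSpace 𝕜 E]

lemma norm_comp_id_add_smul_starProjection_le {T : V →L[𝕜] E} (hT : ‖T‖ ≤ 1)
    {K : Submodule 𝕜 V} {c : ℝ} (hc : 0 ≤ c) (hK : ∀ w ∈ K, ‖T w‖ ≤ c * ‖w‖) {t : ℝ} (ht : 0 ≤ t) :
    ‖T ∘L (ContinuousLinearMap.id 𝕜 V + (t : 𝕜) • K.starProjection)‖ ≤ 1 + t * c := by
  refine ContinuousLinearMap.opNorm_le_bound _ (by positivity) fun v => ?_
  have hP : ‖T (K.starProjection v)‖ ≤ c * ‖v‖ :=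
    (hK _ (K.starProjection_apply_mem v)).trans
      (mul_le_mul_of_nonneg_left (K.norm_starProjection_apply_le v) hc)
  calc ‖(T ∘L (ContinuousLinearMap.id 𝕜 V + (t : 𝕜) • K.starProjection)) v‖
      = ‖T v + (t : 𝕜) • T (K.starProjection v)‖ := by simp
    _ ≤ ‖T v‖ + t * ‖T (K.starProjection v)‖ := by
        refine (norm_add_le _ _).trans_eq ?_
        rw [norm_smul, RCLike.norm_ofReal, abs_of_nonneg ht]
    _ ≤ 1 * ‖v‖ + t * (c * ‖v‖) := by gcongr; exact T.le_of_opNorm_le hT v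
    _ = (1 + t * c) * ‖v‖ := by ring

lemma det_comp_smul (e : E →L[𝕜] V) (a : 𝕜) (T : V →L[𝕜] E) :
    (e ∘L (a • T)).det = a ^ finrank 𝕜 V * (e ∘L T).det := by
  rw [ContinuousLinearMap.comp_smul, ContinuousLinearMap.det, ContinuousLinearMap.toLinearMap_smul,
    LinearMap.det_smul]

theorem finrank_le_mul_of_isMaxOn_norm_det {e : E ≃L[𝕜] V} {T₀ : V →L[𝕜] E}
    (hT₀ : T₀ ∈ closedBall 0 1)
    (hmax : IsMaxOn (fun T => ‖((e : E →L[𝕜] V) ∘L T).det‖) (closedBall 0 1) T₀)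
    (hdet : ((e : E →L[𝕜] V) ∘L T₀).det ≠ 0)
    {K : Submodule 𝕜 V} {c : ℝ} (hc : 0 ≤ c) (hK : ∀ w ∈ K, ‖T₀ w‖ ≤ c * ‖w‖) :
    (finrank 𝕜 K : ℝ) ≤ finrank 𝕜 V * c := by
  refine natCast_le_mul_of_forall_one_add_pow_le fun t ht => ?_
  set T := T₀ ∘L (ContinuousLinearMap.id 𝕜 V + (t : 𝕜) • K.starProjection)
  have hpos : 0 < 1 + t * c := by positivity
  have hdetT :
      ((e : E →L[𝕜] V) ∘L T).det = ((e : E →L[𝕜] V) ∘L T₀).det * (1 + t) ^ finrank 𝕜 K := by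
    rw [← ContinuousLinearMap.comp_assoc, ContinuousLinearMap.det,
      ContinuousLinearMap.toLinearMap_comp, LinearMap.det_comp, ← ContinuousLinearMap.det,
      ← ContinuousLinearMap.det, det_id_add_smul_starProjection]
  -- `T` rescaled to norm at most `1` competes with `T₀`
  have hmem : (((1 + t * c)⁻¹ : ℝ) : 𝕜) • T ∈ closedBall 0 1 := by
    rw [mem_closedBall_zero_iff, norm_smul, RCLike.norm_ofReal, abs_of_pos (by positivity),
      inv_mul_le_one₀ hpos]
    rw [mem_closedBall_zero_iff] at hT₀
    exact norm_comp_id_add_smul_starProjection_le hT₀ hc hK ht.le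
  have hnorm : ‖(1 + t : 𝕜)‖ = 1 + t := by
    norm_cast
    exact abs_of_pos (by positivity)
  have := hmax hmem
  simp only [Set.mem_ofPred_eq, det_comp_smul, hdetT, norm_mul, norm_pow, RCLike.norm_ofReal,
    hnorm, abs_of_pos (inv_pos.2 hpos), inv_pow] at this
  rw [inv_mul_le_iff₀ (by positivity), mul_comm] at this
  exact le_of_mul_le_mul_right this (norm_pos_iff.2 hdet)

variable [FiniteDimensional 𝕜 E]

lemma exists_isMaxOn_norm_det (e : E ≃L[𝕜] V) :
    ∃ T₀ ∈ closedBall (0 : V →L[𝕜] E) 1,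
      IsMaxOn (fun T => ‖((e : E →L[𝕜] V) ∘L T).det‖) (closedBall 0 1) T₀ ∧
      ((e : E →L[𝕜] V) ∘L T₀).det ≠ 0 := by
  have : ProperSpace (V →L[𝕜] E) := FiniteDimensional.proper 𝕜 _
  obtain ⟨T₀, hT₀, hmax⟩ := (isCompact_closedBall (0 : V →L[𝕜] E) 1).exists_isMaxOn
    (f := fun T => ‖((e : E →L[𝕜] V) ∘L T).det‖) (nonempty_closedBall.2 zero_le_one)
    ((ContinuousLinearMap.continuous_det.comp
      (ContinuousLinearMap.compL 𝕜 V E V e).continuous).norm.continuousOn)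
  refine ⟨T₀, hT₀, hmax, fun h0 => ?_⟩
  set a : 𝕜 := (((‖(e.symm : V →L[𝕜] E)‖ + 1)⁻¹ : ℝ) : 𝕜)
  have ha : a ≠ 0 := RCLike.ofReal_ne_zero.2 (by positivity)
  have hmem : a • (e.symm : V →L[𝕜] E) ∈ closedBall 0 1 := by
    rw [mem_closedBall_zero_iff, norm_smul, RCLike.norm_ofReal, abs_of_pos (by positivity),
      inv_mul_le_one₀ (by positivity)]
    linarith
  have hdet : ((e : E →L[𝕜] V) ∘L (a • (e.symm : V →L[𝕜] E))).det = a ^ finrank 𝕜 V := by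
    rw [det_comp_smul, e.coe_comp_coe_symm, ContinuousLinearMap.det,
      ContinuousLinearMap.coe_id, LinearMap.det_id, mul_one]
  have := hmax hmem
  simp only [Set.mem_ofPred_eq, hdet, h0, norm_zero, norm_pow] at this
  have : 0 < ‖a‖ ^ finrank 𝕜 V := pow_pos (norm_pos_iff.2 ha) _
  linarith

theorem exists_orthonormal_half_le_norm_apply
    (hEV : finrank 𝕜 E = finrank 𝕜 V) {m : ℕ} (hm : 2 * m ≤ finrank 𝕜 V) :
    ∃ T ∈ closedBall (0 : V →L[𝕜] E) 1,
      ∃ u : Fin m → V, Orthonormal 𝕜 u ∧ ∀ i, 1 / 2 ≤ ‖T (u i)‖ := by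
  obtain ⟨T, hT, hmax, hdet⟩ := exists_isMaxOn_norm_det (ContinuousLinearEquiv.ofFinrankEq hEV)
  refine ⟨T, hT, exists_orthonormal_forall_of_exists_mem_orthogonal
    (P := fun w => 1 / 2 ≤ ‖T w‖) fun K hK => ?_⟩
  by_contra! hsmall
  have hperp : ∀ w ∈ Kᗮ, ‖T w‖ ≤ 1 / 2 * ‖w‖ := by
    intro w hw
    rcases eq_or_ne w 0 with rfl | hw0
    · simp
    have hw0' : 0 < ‖w‖ := norm_pos_iff.2 hw0
    have := hsmall ((‖w‖⁻¹ : 𝕜) • w) (Kᗮ.smul_mem _ hw) (by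
      rw [norm_smul, norm_inv, RCLike.norm_ofReal, abs_of_pos hw0', inv_mul_cancel₀ hw0'.ne'])
    rw [map_smul, norm_smul, norm_inv, RCLike.norm_ofReal, abs_of_pos hw0',
      inv_mul_lt_iff₀ hw0'] at this
    linarith
  have hrank := finrank_le_mul_of_isMaxOn_norm_det hT hmax hdet (by norm_num) hperp
  have hsum : (finrank 𝕜 K : ℝ) + finrank 𝕜 Kᗮ = finrank 𝕜 V := by
    exact_mod_cast K.finrank_add_finrank_orthogonal
  have hK' : (finrank 𝕜 K : ℝ) + 1 ≤ m := by exact_mod_cast hK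
  have hm' : (2 * m : ℝ) ≤ finrank 𝕜 V := by exact_mod_cast hm
  linarith

end InnerProductSpace

theorem exists_dvoretzky_rogers_family {𝕜 X : Type*} [RCLike 𝕜] [NormedAddCommGroup X]
    [NormedSpace 𝕜 X] (hX : ¬ FiniteDimensional 𝕜 X) (m : ℕ) :
    ∃ x : Fin m → X, (∀ i, 1 / 2 ≤ ‖x i‖ ∧ ‖x i‖ ≤ 1) ∧
      ∀ x' : X →L[𝕜] 𝕜, ∑ i, ‖x' (x i)‖ ≤ √m * ‖x'‖ := by
  obtain ⟨v, hv⟩ : ∃ v : Fin (2 * m) → X, LinearIndependent 𝕜 v :=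
    exists_linearIndependent_of_le_rank <| Cardinal.natCast_lt_aleph0.le.trans <|
      not_lt.1 <| (Module.rank_lt_aleph0_iff).not.2 hX
  set E := Submodule.span 𝕜 (Set.range v)
  have : FiniteDimensional 𝕜 E := FiniteDimensional.span_of_finite 𝕜 (Set.finite_range v)
  have hE : finrank 𝕜 E = finrank 𝕜 (EuclideanSpace 𝕜 (Fin (2 * m))) := by
    rw [finrank_span_eq_card hv, finrank_euclideanSpace_fin, Fintype.card_fin]
  obtain ⟨T, hT, u, hu, hTu⟩ :=
    exists_orthonormal_half_le_norm_apply hE finrank_euclideanSpace_fin.ge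
  rw [mem_closedBall_zero_iff] at hT
  refine ⟨fun i => T (u i), fun i => ⟨hTu i, ?_⟩, fun x' => ?_⟩
  · simpa [hu.norm_eq_one] using T.le_of_opNorm_le hT (u i)
  · have hφ : ‖x' ∘L E.subtypeL ∘L T‖ ≤ ‖x'‖ :=
      calc ‖x' ∘L E.subtypeL ∘L T‖ ≤ ‖x'‖ * (‖E.subtypeL‖ * ‖T‖) :=
            (x'.opNorm_comp_le _).trans (by gcongr; exact ContinuousLinearMap.opNorm_comp_le _ _)
        _ ≤ ‖x'‖ * (1 * 1) := by gcongr; exact Submodule.norm_subtypeL_le E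
        _ = ‖x'‖ := by ring
    simpa using (hu.sum_norm_apply_le (x' ∘L E.subtypeL ∘L T)).trans
      (mul_le_mul_of_nonneg_left hφ (Real.sqrt_nonneg _))

lemma summable_natCast_add_one_rpow_iff {p : ℝ} :
    Summable (fun n : ℕ => ((n + 1 : ℕ) : ℝ) ^ p) ↔ p < -1 :=
  (summable_nat_add_iff 1).trans Real.summable_nat_rpow

lemma sum_range_two_pow_eq_add_sum_Ico {M : Type*} [AddCommMonoid M] (f : ℕ → M) (K : ℕ) :
    ∑ n ∈ range (2 ^ K), f n = f 0 + ∑ k ∈ range K, ∑ n ∈ Ico (2 ^ k) (2 ^ (k + 1)), f n := by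
  induction K with
  | zero => simp
  | succ K ih =>
    rw [← sum_range_add_sum_Ico f (Nat.pow_le_pow_right two_pos K.le_succ), ih, sum_range_succ,
      add_assoc]

section Dirichlet

variable {X : Type*}

theorem dirichletSigmaC_le_one_of_norm_le [NormedAddCommGroup X] [NormedSpace ℂ X]
    [CompleteSpace X] {a : ℕ → X} {C : ℝ} (ha : ∀ n, ‖a n‖ ≤ C) : dirichletSigmaC a ≤ 1 := by
  refine sInf_le ⟨1, rfl, fun s hs => ?_⟩
  have hC : 0 ≤ C := (norm_nonneg _).trans (ha 0)
  have hsum : Summable fun n : ℕ => C * ((n + 1 : ℕ) : ℝ) ^ (-s.re) :=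
    (summable_natCast_add_one_rpow_iff.2 (by linarith)).mul_left C
  refine ⟨_, (Summable.of_norm_bounded hsum fun n => ?_).hasSum.tendsto_sum_nat⟩
  rw [norm_smul, Complex.norm_natCast_cpow_of_pos n.succ_pos, Complex.neg_re, mul_comm]
  gcongr
  exact ha _

theorem one_le_dirichletSigmaA_of_le_norm [SeminormedAddCommGroup X] {a : ℕ → X} {c : ℝ}
    (hc : 0 < c) (ha : ∀ n, c ≤ ‖a (n + 1)‖) : 1 ≤ dirichletSigmaA a := by
  refine le_sInf ?_
  rintro _ ⟨r, rfl, hr⟩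
  rw [← EReal.coe_one, EReal.coe_le_coe_iff]
  refine le_of_forall_gt_imp_ge_of_dense fun σ hσ => ?_
  have : Summable fun n : ℕ => ((n + 1 : ℕ) : ℝ) ^ (-σ) := by
    refine ((hr σ hσ).mul_left c⁻¹).of_nonneg_of_le (fun n => by positivity) fun n => ?_
    rw [← mul_assoc]
    exact le_mul_of_one_le_left (by positivity) ((le_inv_mul_iff₀ hc).2 (by simpa using ha n))
  linarith [summable_natCast_add_one_rpow_iff.1 this]

theorem dirichletSigmaA_le_of_sum_Ico_two_pow_le [SeminormedAddCommGroup X] {a : ℕ → X}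
    {α C : ℝ} (hα : 0 ≤ α)
    (ha : ∀ k : ℕ, ∑ n ∈ Ico (2 ^ k) (2 ^ (k + 1)), ‖a n‖ ≤ C * ((2 : ℝ) ^ k) ^ α) :
    dirichletSigmaA a ≤ α := by
  refine sInf_le ⟨α, rfl, fun σ hσ => ?_⟩
  set g : ℕ → ℝ := fun n => ‖a n‖ * (n : ℝ) ^ (-σ)
  suffices Summable g by exact_mod_cast (summable_nat_add_iff 1).2 this
  set ρ : ℝ := 2 ^ (α - σ)
  have hg (n : ℕ) : 0 ≤ g n := by positivity
  have hρ : ρ < 1 := Real.rpow_lt_one_of_one_lt_of_neg one_lt_two (by linarith)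
  have hC : 0 ≤ C := by simpa using (sum_nonneg fun n _ => norm_nonneg (a n)).trans (ha 0)
  have hblock (k : ℕ) : ∑ n ∈ Ico (2 ^ k) (2 ^ (k + 1)), g n ≤ C * ρ ^ k := by
    have h2k : (0 : ℝ) < 2 ^ k := by positivity
    calc ∑ n ∈ Ico (2 ^ k) (2 ^ (k + 1)), g n
        ≤ ∑ n ∈ Ico (2 ^ k) (2 ^ (k + 1)), ‖a n‖ * ((2 : ℝ) ^ k) ^ (-σ) := by
          refine sum_le_sum fun n hn => mul_le_mul_of_nonneg_left ?_ (norm_nonneg _)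
          refine Real.rpow_le_rpow_of_nonpos h2k ?_ (by linarith)
          exact_mod_cast (mem_Ico.1 hn).1
      _ = (∑ n ∈ Ico (2 ^ k) (2 ^ (k + 1)), ‖a n‖) * ((2 : ℝ) ^ k) ^ (-σ) := (sum_mul ..).symm
      _ ≤ C * ((2 : ℝ) ^ k) ^ α * ((2 : ℝ) ^ k) ^ (-σ) := by gcongr; exact ha k
      _ = C * ρ ^ k := by
          rw [mul_assoc, ← Real.rpow_add h2k, ← sub_eq_add_neg, ← Real.rpow_pow_comm zero_le_two]
  refine summable_of_sum_range_le (c := g 0 + C * (1 - ρ)⁻¹) hg fun M => ?_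
  calc ∑ n ∈ range M, g n ≤ ∑ n ∈ range (2 ^ M), g n :=
        sum_le_sum_of_subset_of_nonneg (range_subset_range.2 M.lt_two_pow_self.le)
          fun n _ _ => hg n
    _ = g 0 + ∑ k ∈ range M, ∑ n ∈ Ico (2 ^ k) (2 ^ (k + 1)), g n :=
        sum_range_two_pow_eq_add_sum_Ico g M
    _ ≤ g 0 + ∑ k ∈ range M, C * ρ ^ k := by gcongr with k; exact hblock k
    _ ≤ g 0 + C * (1 - ρ)⁻¹ := by
        rw [← mul_sum, range_eq_Ico]
        gcongr
        simpa using geom_sum_Ico_le_of_lt_one (by positivity) hρ (m := 0) (n := M)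

/-- The families `x k` laid end to end: `x k i` sits at index `2^k + i`, and index `0` repeats
`x 0 0`. The `else` branch is never taken. -/
noncomputable def dyadicBlockSeq (x : ∀ k : ℕ, Fin (2 ^ k) → X) (n : ℕ) : X :=
  if h : n - 2 ^ Nat.log 2 n < 2 ^ Nat.log 2 n then x (Nat.log 2 n) ⟨_, h⟩ else x 0 0

lemma exists_dyadicBlockSeq_eq (x : ∀ k : ℕ, Fin (2 ^ k) → X) (n : ℕ) :
    ∃ k i, dyadicBlockSeq x n = x k i := by
  have h := Nat.lt_pow_succ_log_self one_lt_two n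
  rw [pow_succ] at h
  rw [dyadicBlockSeq, dif_pos (by omega)]
  exact ⟨_, _, rfl⟩

lemma dyadicBlockSeq_two_pow_add (x : ∀ k : ℕ, Fin (2 ^ k) → X) {k i : ℕ} (hi : i < 2 ^ k) :
    dyadicBlockSeq x (2 ^ k + i) = x k ⟨i, hi⟩ := by
  have hlog : Nat.log 2 (2 ^ k + i) = k :=
    Nat.log_eq_of_pow_le_of_lt_pow (by omega) (by rw [pow_succ]; omega)
  have hsub : 2 ^ k + i - 2 ^ Nat.log 2 (2 ^ k + i) = i := by rw [hlog]; omega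
  have hx : ∀ (L j : ℕ) (h : j < 2 ^ L), L = k → j = i → x L ⟨j, h⟩ = x k ⟨i, hi⟩ := by
    rintro _ _ _ rfl rfl
    rfl
  rw [dyadicBlockSeq, dif_pos (by rw [hsub, hlog]; exact hi)]
  exact hx _ _ _ hlog hsub

lemma sum_Ico_dyadicBlockSeq {M : Type*} [AddCommMonoid M] (f : X → M)
    (x : ∀ k : ℕ, Fin (2 ^ k) → X) (k : ℕ) :
    ∑ n ∈ Ico (2 ^ k) (2 ^ (k + 1)), f (dyadicBlockSeq x n) = ∑ i, f (x k i) := by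
  rw [sum_Ico_eq_sum_range, pow_succ, mul_two, Nat.add_sub_cancel, ← Fin.sum_univ_eq_sum_range]
  exact sum_congr rfl fun i _ => by rw [dyadicBlockSeq_two_pow_add x i.2]

end Dirichlet

/-- Every infinite-dimensional complex Banach space `X` satisfies `G_a(X) ≥ 1/2`. -/
theorem gapA_ge_half_of_infinite_dimensional
    (X : Type*) [NormedAddCommGroup X] [NormedSpace ℂ X] [CompleteSpace X]
    (hX : ¬ FiniteDimensional ℂ X) :
    ((1 / 2 : ℝ) : EReal) ≤ dirichletGapA X := by
  choose x hx hweak using fun k : ℕ => exists_dvoretzky_rogers_family hX (2 ^ k)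
  set a := dyadicBlockSeq x
  have hnorm (n : ℕ) : 1 / 2 ≤ ‖a n‖ ∧ ‖a n‖ ≤ 1 := by
    obtain ⟨k, i, h⟩ := exists_dyadicBlockSeq_eq x n
    simpa only [a, h] using hx k i
  have hσc : dirichletSigmaC a < ⊤ :=
    (dirichletSigmaC_le_one_of_norm_le fun n => (hnorm n).2).trans_lt (EReal.coe_lt_top 1)
  have hσa : 1 ≤ dirichletSigmaA a :=
    one_le_dirichletSigmaA_of_le_norm one_half_pos fun n => (hnorm (n + 1)).1
  have hσaw : dirichletSigmaAw a ≤ ((1 / 2 : ℝ) : EReal) := by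
    refine iSup_le fun x' =>
      dirichletSigmaA_le_of_sum_Ico_two_pow_le (C := ‖x'‖) one_half_pos.le fun k => ?_
    rw [sum_Ico_dyadicBlockSeq (fun y => ‖x' y‖), mul_comm, ← Real.sqrt_eq_rpow]
    exact_mod_cast hweak k x'
  refine le_sSup_of_le ⟨a, hσc, rfl⟩ ?_
  calc ((1 / 2 : ℝ) : EReal) = 1 - ((1 / 2 : ℝ) : EReal) := by
        rw [← EReal.coe_one, ← EReal.coe_sub]; norm_num
    _ ≤ dirichletSigmaA a - dirichletSigmaAw a := EReal.sub_le_sub hσa hσaw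
end

section
/- Let X be an infinite-dimensional complex Banach space and 2 ≤ p < ∞. Suppose that every sequence (x_n)_{n≥1} in X with Σ_n |x'(x_n)| < ∞ for every continuous linear functional x' ∈ X' satisfies Σ_n ‖x_n‖^p < ∞ (equivalently, the identity of X is (p,1)-summing). Then G_a(X) ≤ 1 − 1/p, where G_a(X) is the gap for absolute convergence of Dirichlet series in X. -/
open Filter Finset Topology

private lemma sigmaA_summable {X : Type*} [SeminormedAddCommGroup X] {a : ℕ → X} {σ : ℝ}
    (h : dirichletSigmaA a < (σ : EReal)) :
    Summable (fun n : ℕ => ‖a (n + 1)‖ * ((n + 1 : ℕ) : ℝ) ^ (-σ)) := by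
  obtain ⟨x, hx, hlt⟩ := sInf_lt_iff.mp h
  obtain ⟨r, rfl, hr⟩ := hx
  exact hr σ (by exact_mod_cast hlt)

private lemma key_summable {X : Type*} [NormedAddCommGroup X] [NormedSpace ℂ X]
    {p : ℝ} (hp : 2 ≤ p)
    (hsum : ∀ x : ℕ → X, (∀ x' : X →L[ℂ] ℂ, Summable (fun n => ‖x' (x n)‖)) →
      Summable (fun n => ‖x n‖ ^ p))
    {a : ℕ → X} {σ t : ℝ}
    (hw : ∀ x' : X →L[ℂ] ℂ,
      Summable (fun n : ℕ => ‖x' (a (n + 1))‖ * ((n + 1 : ℕ) : ℝ) ^ (-σ)))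
    (ht : 1 - 1 / p < t) :
    Summable (fun n : ℕ => ‖a (n + 1)‖ * ((n + 1 : ℕ) : ℝ) ^ (-(σ + t))) := by
  have hp1 : (1 : ℝ) < p := lt_of_lt_of_le one_lt_two hp
  have hpq : p.HolderConjugate (Real.conjExponent p) := Real.HolderConjugate.conjExponent hp1
  set q := Real.conjExponent p with hqdef
  have hpos : ∀ n : ℕ, (0 : ℝ) < ((n + 1 : ℕ) : ℝ) := fun n => by positivity
  set x : ℕ → X := fun n => ((((n + 1 : ℕ) : ℝ) ^ (-σ) : ℝ) : ℂ) • a (n + 1) with hxdef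
  have hxn : ∀ n, ‖x n‖ = ‖a (n + 1)‖ * ((n + 1 : ℕ) : ℝ) ^ (-σ) := by
    intro n
    rw [hxdef, norm_smul, Complex.norm_real, Real.norm_eq_abs,
      abs_of_nonneg (Real.rpow_nonneg (hpos n).le _), mul_comm]
  have h1 : Summable (fun n => (‖a (n + 1)‖ * ((n + 1 : ℕ) : ℝ) ^ (-σ)) ^ p) := by
    have := hsum x ?_
    · simpa only [hxn] using this
    · intro x'
      have : (fun n => ‖x' (x n)‖)
          = fun n => ‖x' (a (n + 1))‖ * ((n + 1 : ℕ) : ℝ) ^ (-σ) := by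
        funext n
        rw [hxdef]
        simp only [map_smul, smul_eq_mul, norm_mul, Complex.norm_real, Real.norm_eq_abs,
          abs_of_nonneg (Real.rpow_nonneg (hpos n).le _)]
        ring
      rw [this]
      exact hw x'
  have hq1 : q⁻¹ < t := by
    have := hpq.inv_add_inv_eq_one
    have h1p : (1 : ℝ) / p = p⁻¹ := one_div p
    linarith [ht, h1p ▸ ht]
  have htq : (1 : ℝ) < t * q := by
    have hqpos : 0 < q := hpq.symm.pos
    calc (1 : ℝ) = q⁻¹ * q := (inv_mul_cancel₀ hqpos.ne').symm
    _ < t * q := by exact mul_lt_mul_of_pos_right hq1 hqpos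
  have h2 : Summable (fun n : ℕ => (((n + 1 : ℕ) : ℝ) ^ (-t)) ^ q) := by
    have hbase : Summable (fun n : ℕ => ((n : ℝ)) ^ (-(t * q))) :=
      Real.summable_nat_rpow.mpr (by linarith)
    have := (summable_nat_add_iff 1).mpr hbase
    apply this.congr
    intro n
    rw [show (-(t * q)) = (-t) * q by ring, Real.rpow_mul (by positivity)]
  refine Summable.of_nonneg_of_le (fun n => by positivity) ?_
    ((h1.div_const p).add (h2.div_const q))
  intro n
  have heq : ‖a (n + 1)‖ * ((n + 1 : ℕ) : ℝ) ^ (-(σ + t))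
      = (‖a (n + 1)‖ * ((n + 1 : ℕ) : ℝ) ^ (-σ)) * (((n + 1 : ℕ) : ℝ) ^ (-t)) := by
    rw [neg_add, Real.rpow_add (hpos n), mul_assoc]
  rw [heq]
  exact Real.young_inequality_of_nonneg (by positivity) (by positivity) hpq

set_option maxHeartbeats 1000000 in
/-- If the identity of an infinite-dimensional complex Banach space `X` is
`(p,1)`-summing (`2 ≤ p < ∞`), then `G_a(X) ≤ 1 - 1/p`. -/
theorem gapA_le_of_p_one_summing
    (X : Type*) [NormedAddCommGroup X] [NormedSpace ℂ X] [CompleteSpace X]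
    (hX : ¬ FiniteDimensional ℂ X) (p : ℝ) (hp : 2 ≤ p)
    (hsum : ∀ x : ℕ → X, (∀ x' : X →L[ℂ] ℂ, Summable (fun n => ‖x' (x n)‖)) →
      Summable (fun n => ‖x n‖ ^ p)) :
    dirichletGapA X ≤ ((1 - 1 / p : ℝ) : EReal) := by
  apply sSup_le
  rintro g ⟨a, -, rfl⟩
  set c : ℝ := 1 - 1 / p with hc
  set W := dirichletSigmaAw a with hW
  have key : dirichletSigmaA a ≤ W + (c : EReal) := by
    rcases eq_or_ne W ⊤ with hWtop | hWtop
    · rw [hWtop, EReal.top_add_coe]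
      exact le_top
    · by_contra hcon
      push_neg at hcon
      obtain ⟨r, hr1, hr2⟩ := EReal.exists_between_coe_real hcon
      refine absurd ?_ (not_le.mpr hr2)
      apply sInf_le
      refine ⟨r, rfl, ?_⟩
      intro σ' hσ'
      have hWc : W + (c : EReal) < (σ' : EReal) :=
        lt_trans hr1 (by exact_mod_cast hσ')
      have hWlt : W < (σ' : EReal) - (c : EReal) := by
        rw [EReal.lt_sub_iff_add_lt (Or.inl (EReal.coe_ne_bot c))
          (Or.inl (EReal.coe_ne_top c))]
        exact hWc
      rw [← EReal.coe_sub] at hWlt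
      obtain ⟨σ, hσ1, hσ2⟩ := EReal.exists_between_coe_real hWlt
      have hσ2' : σ < σ' - c := by exact_mod_cast hσ2
      have hw : ∀ x' : X →L[ℂ] ℂ,
          Summable (fun n : ℕ => ‖x' (a (n + 1))‖ * ((n + 1 : ℕ) : ℝ) ^ (-σ)) := by
        intro x'
        have hle : dirichletSigmaA (fun n => x' (a n)) ≤ W := by
          rw [hW, dirichletSigmaAw]
          exact le_iSup (fun y : X →L[ℂ] ℂ => dirichletSigmaA fun n => y (a n)) x'
        exact sigmaA_summable (lt_of_le_of_lt hle hσ1)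
      have ht : 1 - 1 / p < σ' - σ := by rw [hc] at hσ2'; linarith
      have := key_summable hp hsum hw ht
      have heq : σ + (σ' - σ) = σ' := by ring
      rwa [heq] at this
  calc dirichletSigmaA a - W ≤ (c : EReal) := EReal.sub_le_of_le_add' key
end

section
/- Let X be an infinite-dimensional complex Banach space and r ∈ ℝ with G_a(X) < r < 1, where G_a(X) is the gap for absolute convergence of Dirichlet series in X. Then for every t > 1/(1−r), every sequence (x_n)_{n≥1} in X with Σ_n |x'(x_n)| < ∞ for every continuous linear functional x' ∈ X' satisfies Σ_n ‖x_n‖^t < ∞ (i.e. the identity of X is (t,1)-summing). -/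
open Filter Finset Topology

/-!
For an injective `g`, the Dirichlet series `∑ x_{g(n)} n^{-s}` has bounded coefficients, so
`σ_c ≤ 1`, and weakly summable ones, so `σ_a^w ≤ 0`; the gap hypothesis then gives
`∑ ‖x_{g(n)}‖ n^{-σ} < ∞` for every `σ > r`. Taking for `g` the non-increasing rearrangement of
`‖x_n‖`, monotonicity gives `‖x_{g(n)}‖ · n^{1-σ} ≲ ∑_{k ≤ n} ‖x_{g(k)}‖ k^{-σ}`, so
`‖x_{g(n)}‖ = O(n^{σ-1})`, which lies in `ℓ^t` as soon as `t (1 - σ) > 1`.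
-/

open Function

section Dirichlet

variable {X : Type*} [NormedAddCommGroup X] [NormedSpace ℂ X]

theorem dirichletSigmaC_lt_top_of_norm_le [CompleteSpace X] {a : ℕ → X} {M : ℝ}
    (hM : ∀ n, ‖a n‖ ≤ M) :
    dirichletSigmaC a < ⊤ := by
  refine (sInf_le ?_).trans_lt (EReal.coe_lt_top 1)
  refine ⟨1, rfl, fun s hs => ?_⟩
  have hnorm (n : ℕ) : ‖(((n + 1 : ℕ) : ℂ) ^ (-s)) • a (n + 1)‖
      ≤ M * ((n + 1 : ℕ) : ℝ) ^ (-s.re) := by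
    rw [norm_smul, mul_comm, ← Complex.ofReal_natCast,
      Complex.norm_cpow_eq_rpow_re_of_pos (by positivity), Complex.neg_re]
    exact mul_le_mul_of_nonneg_right (hM _) (by positivity)
  have hzeta : Summable fun n : ℕ => ((n + 1 : ℕ) : ℝ) ^ (-s.re) :=
    (summable_nat_add_iff 1).2 (Real.summable_nat_rpow.2 (by linarith))
  exact ⟨_, (Summable.of_norm_bounded (hzeta.mul_left M) hnorm).hasSum.tendsto_sum_nat⟩

theorem dirichletSigmaA_le_of_forall_summable {E : Type*} [SeminormedAddCommGroup E]
    {a : ℕ → E} {r : ℝ}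
    (h : ∀ σ : ℝ, r < σ → Summable fun n : ℕ => ‖a (n + 1)‖ * ((n + 1 : ℕ) : ℝ) ^ (-σ)) :
    dirichletSigmaA a ≤ r :=
  sInf_le ⟨r, rfl, h⟩

theorem summable_of_dirichletSigmaA_lt {E : Type*} [SeminormedAddCommGroup E]
    {a : ℕ → E} {σ : ℝ} (h : dirichletSigmaA a < σ) :
    Summable fun n : ℕ => ‖a (n + 1)‖ * ((n + 1 : ℕ) : ℝ) ^ (-σ) := by
  obtain ⟨_, ⟨r, rfl, hr⟩, hrσ⟩ := sInf_lt_iff.1 h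
  exact hr σ (EReal.coe_lt_coe_iff.1 hrσ)

theorem dirichletSigmaAw_nonpos {a : ℕ → X}
    (ha : ∀ x' : X →L[ℂ] ℂ, Summable fun n => ‖x' (a (n + 1))‖) :
    dirichletSigmaAw a ≤ 0 := by
  refine iSup_le fun x' => (dirichletSigmaA_le_of_forall_summable fun σ hσ => ?_).trans_eq
    EReal.coe_zero
  refine (ha x').of_nonneg_of_le (fun n => by positivity) fun n => ?_
  exact mul_le_of_le_one_right (norm_nonneg _)
    (Real.rpow_le_one_of_one_le_of_nonpos (by simp) (by linarith))

theorem dirichletSigmaA_le_gapA {a : ℕ → X} (hc : dirichletSigmaC a < ⊤)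
    (hw : dirichletSigmaAw a ≤ 0) : dirichletSigmaA a ≤ dirichletGapA X :=
  calc dirichletSigmaA a ≤ dirichletSigmaA a - dirichletSigmaAw a :=
        le_add_of_nonneg_right (EReal.neg_nonneg.2 hw)
    _ ≤ dirichletGapA X := le_sSup ⟨a, hc, rfl⟩

theorem summable_norm_mul_rpow_of_gapA_lt [CompleteSpace X] {a : ℕ → X} {M σ : ℝ}
    (hM : ∀ n, ‖a n‖ ≤ M) (ha : ∀ x' : X →L[ℂ] ℂ, Summable fun n => ‖x' (a (n + 1))‖)
    (hσ : dirichletGapA X < σ) :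
    Summable fun n : ℕ => ‖a (n + 1)‖ * ((n + 1 : ℕ) : ℝ) ^ (-σ) :=
  summable_of_dirichletSigmaA_lt <|
    (dirichletSigmaA_le_gapA (dirichletSigmaC_lt_top_of_norm_le hM)
      (dirichletSigmaAw_nonpos ha)).trans_lt hσ

end Dirichlet

theorem exists_norm_le_of_forall_summable_dual {𝕜 X : Type*} [RCLike 𝕜] [NormedAddCommGroup X]
    [NormedSpace 𝕜 X] {x : ℕ → X}
    (hx : ∀ x' : StrongDual 𝕜 X, Summable fun n => ‖x' (x n)‖) : ∃ M, ∀ n, ‖x n‖ ≤ M := by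
  obtain ⟨M, hM⟩ := banach_steinhaus (g := fun n => NormedSpace.inclusionInDoubleDual 𝕜 X (x n))
    fun x' => ⟨∑' n, ‖x' (x n)‖, fun n => (hx x').le_tsum n fun _ _ => norm_nonneg _⟩
  exact ⟨M, fun n => (NormedSpace.inclusionInDoubleDualLi 𝕜).norm_map (x n) ▸ hM n⟩

section Rearrangement

variable {a : ℕ → ℝ}

theorem finite_setOf_le_of_tendsto_zero (ha : Tendsto a atTop (𝓝 0)) {c : ℝ} (hc : 0 < c) :
    {n | c ≤ a n}.Finite := by
  have h : ∀ᶠ n in cofinite, a n < c := Nat.cofinite_eq_atTop ▸ ha.eventually (gt_mem_nhds hc)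
  simpa only [eventually_cofinite, not_lt] using h

theorem exists_max_notMem_of_tendsto_zero (ha₀ : 0 ≤ a) (ha : Tendsto a atTop (𝓝 0))
    (s : Finset ℕ) : ∃ m ∉ s, ∀ k ∉ s, a k ≤ a m := by
  by_cases hpos : ∃ k ∉ s, 0 < a k
  · obtain ⟨k, hks, hk⟩ := hpos
    obtain ⟨m, ⟨hms, hkm⟩, hmax⟩ := Set.exists_max_image {n | n ∉ s ∧ a k ≤ a n} a
      ((finite_setOf_le_of_tendsto_zero ha hk).subset fun n hn => hn.2) ⟨k, hks, le_rfl⟩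
    refine ⟨m, hms, fun n hns => ?_⟩
    rcases le_total (a k) (a n) with hkn | hnk
    · exact hmax n ⟨hns, hkn⟩
    · exact hnk.trans hkm
  · push Not at hpos
    obtain ⟨m, hms⟩ := s.exists_notMem
    exact ⟨m, hms, fun k hks => (hpos k hks).trans (ha₀ m)⟩

/-- Greedy construction: the `k`-th index maximises `a` among the indices not chosen before. -/
theorem exists_injective_antitone_comp (ha₀ : 0 ≤ a) (ha : Tendsto a atTop (𝓝 0)) :
    ∃ f : ℕ → ℕ, Injective f ∧ Antitone (a ∘ f) ∧ ∀ n, 0 < a n → n ∈ Set.range f := by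
  choose pick hpick_notMem hpick_max using exists_max_notMem_of_tendsto_zero ha₀ ha
  let chosen : ℕ → Finset ℕ := fun k => Nat.rec ∅ (fun _ s => insert (pick s) s) k
  let f : ℕ → ℕ := fun k => pick (chosen k)
  have hchosen (k : ℕ) : chosen k = (range k).image f := by
    induction k with
    | zero => rfl
    | succ k ih => rw [range_add_one, image_insert, ← ih]
  have hmem {j k : ℕ} (hjk : j < k) : f j ∈ chosen k :=
    hchosen k ▸ mem_image_of_mem f (mem_range.2 hjk)
  have hnotMem_succ (k : ℕ) : f (k + 1) ∉ chosen k := fun h =>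
    hpick_notMem _ (mem_insert_of_mem h)
  have hf : Injective f := .of_lt_imp_ne fun j k hjk h => hpick_notMem _ (h ▸ hmem hjk)
  refine ⟨f, hf, antitone_nat_of_succ_le fun k => hpick_max _ _ (hnotMem_succ k), fun n hn => ?_⟩
  by_contra hnf
  have hnotMem (k : ℕ) : n ∉ chosen k := by
    rw [hchosen]
    simpa using fun j _ h => hnf ⟨j, h⟩
  exact Set.infinite_of_injective_forall_mem hf (fun k => hpick_max _ _ (hnotMem k))
    (finite_setOf_le_of_tendsto_zero ha hn)

end Rearrangement

section PowerSums

variable {σ : ℝ}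

theorem half_rpow_le_sum_range_rpow_neg (hσ : σ < 1) (k : ℕ) :
    ((k : ℝ) / 2) ^ (1 - σ) ≤ ∑ n ∈ range k, ((n : ℝ) + 1) ^ (-σ) := by
  have hexp : 1 + -σ ≠ 0 := by linarith
  rcases le_or_gt 0 σ with hσ₀ | hσ₀
  · calc ((k : ℝ) / 2) ^ (1 - σ) ≤ (k : ℝ) ^ (1 - σ) :=
          Real.rpow_le_rpow (by positivity) (by linarith [k.cast_nonneg (α := ℝ)]) (by linarith)
      _ = ∑ _n ∈ range k, (k : ℝ) ^ (-σ) := by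
          rw [sum_const, card_range, nsmul_eq_mul, sub_eq_add_neg,
            Real.rpow_add' k.cast_nonneg hexp, Real.rpow_one]
      _ ≤ ∑ n ∈ range k, ((n : ℝ) + 1) ^ (-σ) := by
          refine sum_le_sum fun n hn => Real.rpow_le_rpow_of_nonpos (by positivity) ?_ (by linarith)
          exact_mod_cast mem_range.1 hn
  · -- the terms of the upper half `k / 2 ≤ n < k` are all at least `(k / 2) ^ (-σ)`
    have hcount : (k : ℝ) / 2 ≤ ((k - k / 2 : ℕ) : ℝ) := by
      have : (k : ℝ) ≤ 2 * ((k - k / 2 : ℕ) : ℝ) := by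
        exact_mod_cast (by omega : k ≤ 2 * (k - k / 2))
      linarith
    calc ((k : ℝ) / 2) ^ (1 - σ) = (k : ℝ) / 2 * ((k : ℝ) / 2) ^ (-σ) := by
          rw [sub_eq_add_neg, Real.rpow_add' (by positivity) hexp, Real.rpow_one]
      _ ≤ ((k - k / 2 : ℕ) : ℝ) * ((k : ℝ) / 2) ^ (-σ) := by gcongr
      _ = ∑ _n ∈ Ico (k / 2) k, ((k : ℝ) / 2) ^ (-σ) := by
          rw [sum_const, Nat.card_Ico, nsmul_eq_mul]
      _ ≤ ∑ n ∈ Ico (k / 2) k, ((n : ℝ) + 1) ^ (-σ) := by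
          refine sum_le_sum fun n hn => Real.rpow_le_rpow (by positivity) ?_ (by linarith)
          have : (k : ℝ) ≤ 2 * n + 2 := by
            exact_mod_cast (by have := (mem_Ico.1 hn).1; omega : k ≤ 2 * n + 2)
          linarith
      _ ≤ ∑ n ∈ range k, ((n : ℝ) + 1) ^ (-σ) :=
          sum_le_sum_of_subset_of_nonneg (fun n hn => mem_range.2 (mem_Ico.1 hn).2)
            fun _ _ _ => by positivity

theorem mul_half_rpow_le_tsum_of_antitone {a : ℕ → ℝ} (ha₀ : 0 ≤ a) (hanti : Antitone a)
    (hσ : σ < 1) (hs : Summable fun n => a n * ((n : ℝ) + 1) ^ (-σ)) (n : ℕ) :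
    a n * (((n : ℝ) + 1) / 2) ^ (1 - σ) ≤ ∑' k, a k * ((k : ℝ) + 1) ^ (-σ) :=
  calc a n * (((n : ℝ) + 1) / 2) ^ (1 - σ)
      ≤ a n * ∑ k ∈ range (n + 1), ((k : ℝ) + 1) ^ (-σ) := by
        gcongr
        · exact ha₀ n
        · exact_mod_cast half_rpow_le_sum_range_rpow_neg hσ (n + 1)
    _ = ∑ k ∈ range (n + 1), a n * ((k : ℝ) + 1) ^ (-σ) := mul_sum _ _ _
    _ ≤ ∑ k ∈ range (n + 1), a k * ((k : ℝ) + 1) ^ (-σ) := by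
        gcongr with k hk
        exact hanti (Nat.lt_succ_iff.1 (mem_range.1 hk))
    _ ≤ ∑' k, a k * ((k : ℝ) + 1) ^ (-σ) :=
        hs.sum_le_tsum _ fun k _ => mul_nonneg (ha₀ k) (by positivity)

theorem summable_rpow_of_antitone {a : ℕ → ℝ} (ha₀ : 0 ≤ a) (hanti : Antitone a) {t : ℝ}
    (hσ : σ < 1) (ht : 1 < t * (1 - σ)) (hs : Summable fun n => a n * ((n : ℝ) + 1) ^ (-σ)) :
    Summable fun n => a n ^ t := by
  have ht₀ : 0 < t := by nlinarith
  set T := ∑' k, a k * ((k : ℝ) + 1) ^ (-σ)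
  have hT : 0 ≤ T := tsum_nonneg fun k => mul_nonneg (ha₀ k) (by positivity)
  have hbound (n : ℕ) : a n ≤ T * (((n : ℝ) + 1) / 2) ^ (σ - 1) := by
    rw [show σ - 1 = -(1 - σ) by ring, Real.rpow_neg (by positivity), ← div_eq_mul_inv,
      le_div_iff₀ (by positivity)]
    exact mul_half_rpow_le_tsum_of_antitone ha₀ hanti hσ hs n
  have hzeta : Summable fun n : ℕ => (((n : ℝ) + 1) / 2) ^ ((σ - 1) * t) := by
    have : Summable fun n : ℕ => ((n : ℝ) + 1) ^ ((σ - 1) * t) := by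
      exact_mod_cast (summable_nat_add_iff 1).2 (Real.summable_nat_rpow.2 (by nlinarith))
    exact (this.div_const (2 ^ ((σ - 1) * t))).congr fun n =>
      (Real.div_rpow (by positivity) zero_le_two _).symm
  refine (hzeta.mul_left (T ^ t)).of_nonneg_of_le (fun n => Real.rpow_nonneg (ha₀ n) t)
    fun n => ?_
  calc a n ^ t ≤ (T * (((n : ℝ) + 1) / 2) ^ (σ - 1)) ^ t :=
        Real.rpow_le_rpow (ha₀ n) (hbound n) ht₀.le
    _ = T ^ t * (((n : ℝ) + 1) / 2) ^ ((σ - 1) * t) := by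
        rw [Real.mul_rpow hT (by positivity), ← Real.rpow_mul (by positivity)]

theorem tendsto_zero_of_forall_injective_summable {a : ℕ → ℝ} (ha₀ : 0 ≤ a) (hσ : σ ≤ 1)
    (h : ∀ g : ℕ → ℕ, Injective g → Summable fun n => a (g n) * ((n : ℝ) + 1) ^ (-σ)) :
    Tendsto a atTop (𝓝 0) := by
  refine tendsto_order.2 ⟨fun c hc => Eventually.of_forall fun n => hc.trans_le (ha₀ n),
    fun ε hε => ?_⟩
  by_contra hfreq
  obtain ⟨g, hg, hεg⟩ := extraction_of_frequently_atTop (not_eventually.1 hfreq)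
  have hzeta : Summable fun n : ℕ => ((n : ℝ) + 1) ^ (-σ) := by
    refine (summable_mul_left_iff hε.ne').1 <| (h g hg.injective).of_nonneg_of_le
      (fun n => by positivity) fun n => ?_
    exact mul_le_mul_of_nonneg_right (not_lt.1 (hεg n)) (by positivity)
  have := Real.summable_nat_rpow.1 ((summable_nat_add_iff 1).1 (by exact_mod_cast hzeta))
  linarith

theorem summable_rpow_of_forall_injective_summable {a : ℕ → ℝ} (ha₀ : 0 ≤ a) {t : ℝ}
    (hσ : σ < 1) (ht : 1 < t * (1 - σ))
    (h : ∀ g : ℕ → ℕ, Injective g → Summable fun n => a (g n) * ((n : ℝ) + 1) ^ (-σ)) :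
    Summable fun n => a n ^ t := by
  obtain ⟨f, hf, hanti, hrange⟩ :=
    exists_injective_antitone_comp ha₀ (tendsto_zero_of_forall_injective_summable ha₀ hσ.le h)
  have ht₀ : t ≠ 0 := by rintro rfl; simp at ht; linarith
  refine (hf.summable_iff fun n hn => ?_).1
    (summable_rpow_of_antitone (fun n => ha₀ (f n)) hanti hσ ht (h f hf))
  rw [le_antisymm (not_lt.1 fun hpos => hn (hrange n hpos)) (ha₀ n), Real.zero_rpow ht₀]

end PowerSums

theorem p_one_summing_of_gapA_lt_general
    (X : Type*) [NormedAddCommGroup X] [NormedSpace ℂ X] [CompleteSpace X] (r : ℝ)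
    (h1 : dirichletGapA X < ((r : ℝ) : EReal)) (h2 : r < 1)
    (t : ℝ) (ht : 1 / (1 - r) < t)
    (x : ℕ → X) (hx : ∀ x' : X →L[ℂ] ℂ, Summable (fun n => ‖x' (x n)‖)) :
    Summable (fun n => ‖x n‖ ^ t) := by
  obtain ⟨M, hM⟩ := exists_norm_le_of_forall_summable_dual hx
  have htr : 1 < t * (1 - r) := by rwa [div_lt_iff₀ (by linarith)] at ht
  have ht₀ : 0 < t := by nlinarith
  obtain ⟨σ, hrσ, hσt⟩ : ∃ σ, r < σ ∧ σ < 1 - 1 / t :=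
    exists_between (by rw [lt_sub_iff_add_lt, ← lt_sub_iff_add_lt', div_lt_iff₀ ht₀]; linarith)
  have htσ : 1 < t * (1 - σ) := by
    rw [lt_sub_iff_add_lt, ← lt_sub_iff_add_lt', div_lt_iff₀ ht₀] at hσt; linarith
  refine summable_rpow_of_forall_injective_summable (fun n => norm_nonneg (x n))
    (by linarith [one_div_pos.2 ht₀]) htσ fun g hg => ?_
  -- the abscissae only read the coefficients `a (n + 1)`, hence the shift
  have := summable_norm_mul_rpow_of_gapA_lt (a := fun n => x (g (n - 1))) (fun n => hM _)
    (fun x' => (hx x').comp_injective hg) (h1.trans (EReal.coe_lt_coe_iff.2 hrσ))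
  exact_mod_cast this

/-- If `G_a(X) < r < 1` for an infinite-dimensional complex Banach space `X`, then the
identity of `X` is `(t,1)`-summing for every `t > 1/(1-r)`. -/
theorem p_one_summing_of_gapA_lt
    (X : Type*) [NormedAddCommGroup X] [NormedSpace ℂ X] [CompleteSpace X]
    (hX : ¬ FiniteDimensional ℂ X) (r : ℝ)
    (h1 : dirichletGapA X < ((r : ℝ) : EReal)) (h2 : r < 1)
    (t : ℝ) (ht : 1 / (1 - r) < t)
    (x : ℕ → X) (hx : ∀ x' : X →L[ℂ] ℂ, Summable (fun n => ‖x' (x n)‖)) :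
    Summable (fun n => ‖x n‖ ^ t) :=
  p_one_summing_of_gapA_lt_general X r h1 h2 t ht x hx
end
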